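/- arXiv:cs/0504016 — 8 statements merged into one kernel-verified Lean document; each statement's English description precedes it below -/
import Mathlib

section
/- The Tanner graph of the parity-check matrix of any (possibly shortened) array code with modulus q contains no cycle of length four; equivalently, its girth is at least six. -/
/-- The Tanner graph of a (possibly shortened) array code with modulus `q`,
block-row labels `a 0, …, a (r-1)` (elements of `ZMod q`), and retained
block-column label set `S ⊆ ZMod q`.  Row vertices are pairs `(i, x)`
(block-row `i`, row `x` within the block); column vertices are pairs `(j, y)`
with `j ∈ S` (block-column labeled `j`, column `y` within the block).
A row `(i, x)` is adjacent to a column `(j, y)` iff the corresponding entry of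
the parity-check matrix, i.e. entry `(x, y)` of `P ^ (a i * j)`, equals `1`,
which happens iff `y = x + a i * j`. -/
def tannerGraph (q r : ℕ) (a : Fin r → ZMod q) (S : Finset (ZMod q)) :
    SimpleGraph ((Fin r × ZMod q) ⊕ ({j // j ∈ S} × ZMod q)) where
  Adj u v :=
    match u, v with
    | Sum.inl (i, x), Sum.inr (j, y) => y = x + a i * (j : ZMod q)
    | Sum.inr (j, y), Sum.inl (i, x) => y = x + a i * (j : ZMod q)
    | _, _ => False
  symm := by
    constructor
    rintro (⟨i, x⟩ | ⟨j, y⟩) (⟨i', x'⟩ | ⟨j', y'⟩) h <;> simp_all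
  loopless := by
    constructor
    rintro (⟨i, x⟩ | ⟨j, y⟩) h <;> simp_all

/-!
The Tanner graph is bipartite (rows versus columns), so all its cycles are even, and a
4-cycle would consist of two distinct rows with two distinct common columns, or vice versa.
Rows `(i, x)`, `(i', x')` both adjacent to columns `(j, y)`, `(j', y')` satisfy
`y - x = a i * j`, `y' - x = a i * j'`, `y - x' = a i' * j`, `y' - x' = a i' * j'`, whence
`(a i - a i') * (j - j') = 0`; in the field `ZMod q` and with `a` injective this forces the
rows or the columns to coincide.
-/

open Function

namespace SimpleGraph

variable {V : Type*} {G : SimpleGraph V}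

theorem Walk.IsCycle.length_ne_four_of_commonNeighbors_subsingleton
    (hG : ∀ u w, u ≠ w → (G.commonNeighbors u w).Subsingleton) {v : V} {c : G.Walk v v}
    (hc : c.IsCycle) : c.length ≠ 4 := by
  intro hlen
  rcases c with _ | ⟨h₁, _ | ⟨h₂, _ | ⟨h₃, _ | ⟨h₄, _ | ⟨_, _⟩⟩⟩⟩⟩ <;>
    simp only [Walk.length_cons, Walk.length_nil] at hlen <;> try omega
  rename_i w₁ w₂ w₃
  have hnodup := hc.support_nodup
  simp only [Walk.support_cons, Walk.support_nil, List.tail_cons, List.nodup_cons,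
    List.mem_cons, List.not_mem_nil, or_false, not_or] at hnodup
  obtain ⟨⟨_, hw₁₃, _⟩, ⟨_, hw₂v⟩, _⟩ := hnodup
  exact hw₁₃ <| hG v w₂ (Ne.symm hw₂v) ⟨h₁, h₂.symm⟩ ⟨h₄.symm, h₃⟩

theorem six_le_egirth_of_commonNeighbors_subsingleton (c : G.Coloring Bool)
    (hG : ∀ u w, u ≠ w → (G.commonNeighbors u w).Subsingleton) : 6 ≤ G.egirth := by
  rw [le_egirth]
  intro v w hw
  have heven : Even w.length := (c.even_length_iff_congr w).mpr Iff.rfl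
  have hne := hw.length_ne_four_of_commonNeighbors_subsingleton hG
  have hge := hw.three_le_length
  obtain ⟨k, hk⟩ := heven
  exact_mod_cast (by omega : 6 ≤ w.length)

end SimpleGraph

open SimpleGraph

section TannerGraph

variable {q r : ℕ} {a : Fin r → ZMod q} {S : Finset (ZMod q)}

def tannerGraph.sideColoring : (tannerGraph q r a S).Coloring Bool :=
  Coloring.mk Sum.isLeft <| by
    rintro (⟨i, x⟩ | ⟨j, y⟩) (⟨i', x'⟩ | ⟨j', y'⟩) h <;> simp_all [tannerGraph]

theorem tannerGraph_row_eq_or_col_eq_of_adj [Fact q.Prime] (ha : Injective a)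
    {i i' : Fin r} {x x' y y' : ZMod q} {j j' : S}
    (h₁ : (tannerGraph q r a S).Adj (.inl (i, x)) (.inr (j, y)))
    (h₂ : (tannerGraph q r a S).Adj (.inl (i, x)) (.inr (j', y')))
    (h₃ : (tannerGraph q r a S).Adj (.inl (i', x')) (.inr (j, y)))
    (h₄ : (tannerGraph q r a S).Adj (.inl (i', x')) (.inr (j', y'))) :
    (i, x) = (i', x') ∨ (j, y) = (j', y') := by
  simp only [tannerGraph] at h₁ h₂ h₃ h₄
  have hprod : (a i - a i') * ((j : ZMod q) - j') = 0 := by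
    linear_combination h₃ - h₁ + h₂ - h₄
  rcases mul_eq_zero.mp hprod with hrow | hcol
  · obtain rfl : i = i' := ha (sub_eq_zero.mp hrow)
    left
    ext
    · rfl
    · linear_combination h₃ - h₁
  · obtain rfl : j = j' := Subtype.ext (sub_eq_zero.mp hcol)
    right
    ext
    · rfl
    · linear_combination h₁ - h₂

theorem tannerGraph_commonNeighbors_subsingleton [Fact q.Prime] (ha : Injective a)
    (u w : (Fin r × ZMod q) ⊕ ({j // j ∈ S} × ZMod q)) (huw : u ≠ w) :
    ((tannerGraph q r a S).commonNeighbors u w).Subsingleton := by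
  intro n₁ hn₁ n₂ hn₂
  rcases u with (⟨i, x⟩ | ⟨j, y⟩) <;> rcases w with (⟨i', x'⟩ | ⟨j', y'⟩) <;>
    rcases n₁ with (⟨i₁, x₁⟩ | ⟨j₁, y₁⟩) <;> rcases n₂ with (⟨i₂, x₂⟩ | ⟨j₂, y₂⟩) <;>
    simp only [mem_commonNeighbors] at hn₁ hn₂ <;>
    try (simp [tannerGraph] at hn₁ hn₂; done)
  · rcases tannerGraph_row_eq_or_col_eq_of_adj ha hn₁.1 hn₂.1 hn₁.2 hn₂.2 with h | h
    · exact absurd (congrArg Sum.inl h) huw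
    · exact congrArg Sum.inr h
  · rcases tannerGraph_row_eq_or_col_eq_of_adj ha hn₁.1.symm hn₁.2.symm hn₂.1.symm hn₂.2.symm
      with h | h
    · exact congrArg Sum.inl h
    · exact absurd (congrArg Sum.inr h) huw

end TannerGraph

theorem arrayCode_no_four_cycle_general (q r : ℕ) (hq : q.Prime)
    (a : Fin r → ZMod q) (ha : Function.Injective a) (S : Finset (ZMod q)) :
    (¬ ∃ (v : (Fin r × ZMod q) ⊕ ({j // j ∈ S} × ZMod q))
        (c : (tannerGraph q r a S).Walk v v), c.IsCycle ∧ c.length = 4) ∧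
      6 ≤ (tannerGraph q r a S).egirth := by
  have : Fact q.Prime := ⟨hq⟩
  have hcommon := tannerGraph_commonNeighbors_subsingleton (S := S) ha
  exact ⟨fun ⟨_, _, hc, hlen⟩ ↦ hc.length_ne_four_of_commonNeighbors_subsingleton hcommon hlen,
    six_le_egirth_of_commonNeighbors_subsingleton tannerGraph.sideColoring hcommon⟩

/-- The Tanner graph of the parity-check matrix of any
(possibly shortened) array code with modulus `q` (an odd prime) contains no
cycle of length four; equivalently, its girth is at least six. -/
theorem arrayCode_no_four_cycle (q r : ℕ) (hq : q.Prime) (hqodd : Odd q)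
    (a : Fin r → ZMod q) (ha : Function.Injective a) (S : Finset (ZMod q)) :
    (¬ ∃ (v : (Fin r × ZMod q) ⊕ ({j // j ∈ S} × ZMod q))
        (c : (tannerGraph q r a S).Walk v v), c.IsCycle ∧ c.length = 4) ∧
      6 ≤ (tannerGraph q r a S).egirth :=
  arrayCode_no_four_cycle_general q r hq a ha S
end

section
/- Let C be a (possibly shortened) proper array code with modulus q, three block-rows (column-weight r = 3) and retained block-column label set S ⊆ [0,q−1]. The Tanner graph of C contains a cycle of length six if and only if there exist three distinct labels i, j, k ∈ S satisfying −2i + j + k ≡ 0 (mod q). -/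
/-- The sum is the total shift accumulated along the hexagon
`i₁ → j₁ → i₂ → j₂ → i₃ → j₃ → i₁` of block rows and block columns of the parity-check matrix. -/
def HasHexagon {R : Type*} [CommRing R] {r : ℕ} (a : Fin r → R) (S : Finset R) : Prop :=
  ∃ i₁ i₂ i₃ : Fin r, i₁ ≠ i₂ ∧ i₂ ≠ i₃ ∧ i₁ ≠ i₃ ∧
    ∃ j₁ ∈ S, ∃ j₂ ∈ S, ∃ j₃ ∈ S, j₁ ≠ j₂ ∧ j₂ ≠ j₃ ∧ j₁ ≠ j₃ ∧
      (a i₁ - a i₂) * j₁ + (a i₂ - a i₃) * j₂ + (a i₃ - a i₁) * j₃ = 0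

theorem hasHexagon_iff_of_arithProg {R : Type*} [CommRing R] [NoZeroDivisors R] {a : Fin 3 → R}
    {a₀ d : R} (hd : d ≠ 0) (hAP : ∀ i : Fin 3, a i = a₀ + (i : ℕ) * d) (S : Finset R) :
    HasHexagon a S ↔
      ∃ i ∈ S, ∃ j ∈ S, ∃ k ∈ S, i ≠ j ∧ i ≠ k ∧ j ≠ k ∧ -2 * i + j + k = 0 := by
  constructor
  · rintro ⟨i₁, i₂, i₃, h₁₂, h₂₃, h₁₃, j₁, hj₁, j₂, hj₂, j₃, hj₃, e₁₂, e₂₃, e₁₃, hsum⟩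
    -- `a m - a n = (m - n) * d`; after cancelling `d` the coefficients are a permutation of
    -- `±(1, 1, -2)`, and the label carrying `∓2` is the mean of the other two.
    have key : (((i₁ : ℕ) : R) - i₂) * j₁ + (((i₂ : ℕ) : R) - i₃) * j₂
        + (((i₃ : ℕ) : R) - i₁) * j₃ = 0 := by
      refine (mul_eq_zero.mp ?_).resolve_left hd
      simp only [hAP] at hsum
      linear_combination hsum
    fin_cases i₁ <;> fin_cases i₂ <;> fin_cases i₃ <;>
      simp only [ne_eq, not_true_eq_false] at h₁₂ h₂₃ h₁₃ <;>
      simp only [Nat.cast_zero, Nat.cast_one, Nat.cast_ofNat] at key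
    · exact ⟨j₃, hj₃, j₁, hj₁, j₂, hj₂, e₁₃.symm, e₂₃.symm, e₁₂, by linear_combination -key⟩
    · exact ⟨j₁, hj₁, j₂, hj₂, j₃, hj₃, e₁₂, e₁₃, e₂₃, by linear_combination key⟩
    · exact ⟨j₂, hj₂, j₁, hj₁, j₃, hj₃, e₁₂.symm, e₂₃, e₁₃, by linear_combination key⟩
    · exact ⟨j₂, hj₂, j₁, hj₁, j₃, hj₃, e₁₂.symm, e₂₃, e₁₃, by linear_combination -key⟩
    · exact ⟨j₁, hj₁, j₂, hj₂, j₃, hj₃, e₁₂, e₁₃, e₂₃, by linear_combination -key⟩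
    · exact ⟨j₃, hj₃, j₁, hj₁, j₂, hj₂, e₁₃.symm, e₂₃.symm, e₁₂, by linear_combination key⟩
  · rintro ⟨i, hi, j, hj, k, hk, hij, hik, hjk, hsum⟩
    refine ⟨0, 1, 2, by decide, by decide, by decide,
      j, hj, k, hk, i, hi, hjk, hik.symm, hij.symm, ?_⟩
    simp only [hAP, Fin.val_zero, Fin.val_one, Fin.val_two]
    linear_combination -d * hsum

namespace tannerGraph

open SimpleGraph

variable {q r : ℕ} {a : Fin r → ZMod q} {S : Finset (ZMod q)}

@[simp] theorem adj_inl_inr {i : Fin r} {x : ZMod q} {j : {j // j ∈ S}} {y : ZMod q} :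
    (tannerGraph q r a S).Adj (.inl (i, x)) (.inr (j, y)) ↔ y = x + a i * j := Iff.rfl

@[simp] theorem adj_inr_inl {i : Fin r} {x : ZMod q} {j : {j // j ∈ S}} {y : ZMod q} :
    (tannerGraph q r a S).Adj (.inr (j, y)) (.inl (i, x)) ↔ y = x + a i * j := Iff.rfl

@[simp] theorem not_adj_inl_inl {u v : Fin r × ZMod q} :
    ¬(tannerGraph q r a S).Adj (.inl u) (.inl v) := id

@[simp] theorem not_adj_inr_inr {u v : {j // j ∈ S} × ZMod q} :
    ¬(tannerGraph q r a S).Adj (.inr u) (.inr v) := id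

theorem block_row_ne_of_adj_of_adj {i i' : Fin r} {x x' : ZMod q} {j : {j // j ∈ S}} {y : ZMod q}
    (h : (tannerGraph q r a S).Adj (.inl (i, x)) (.inr (j, y)))
    (h' : (tannerGraph q r a S).Adj (.inl (i', x')) (.inr (j, y))) (hne : (i, x) ≠ (i', x')) :
    i ≠ i' := by
  rintro rfl
  rw [adj_inl_inr] at h h'
  exact hne (by rw [add_right_cancel (h.symm.trans h')])

theorem label_ne_of_adj_of_adj {u : Fin r × ZMod q} {j j' : {j // j ∈ S}} {y y' : ZMod q}
    (h : (tannerGraph q r a S).Adj (.inl u) (.inr (j, y)))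
    (h' : (tannerGraph q r a S).Adj (.inl u) (.inr (j', y'))) (hne : (j, y) ≠ (j', y')) :
    (j : ZMod q) ≠ j' := by
  intro hj
  obtain rfl := Subtype.ext hj
  rw [adj_inl_inr] at h h'
  exact hne (by rw [h, h'])

theorem exists_eq_inr_of_adj_inl {u : Fin r × ZMod q} {w}
    (h : (tannerGraph q r a S).Adj (.inl u) w) : ∃ c, w = .inr c := by
  rcases w with _ | c
  · exact (not_adj_inl_inl h).elim
  · exact ⟨c, rfl⟩

theorem exists_eq_inl_of_adj_inr {c : {j // j ∈ S} × ZMod q} {w}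
    (h : (tannerGraph q r a S).Adj (.inr c) w) : ∃ u, w = .inl u := by
  rcases w with u | _
  · exact ⟨u, rfl⟩
  · exact (not_adj_inr_inr h).elim

theorem exists_isCycle_inl_of_isCycle {v} {c : (tannerGraph q r a S).Walk v v} (hc : c.IsCycle) :
    ∃ (u : Fin r × ZMod q) (c' : (tannerGraph q r a S).Walk (.inl u) (.inl u)),
      c'.IsCycle ∧ c'.length = c.length := by
  rcases v with u | w
  · exact ⟨u, c, hc, rfl⟩
  rcases c with _ | @⟨_, u | _, _, h, _⟩
  · exact (Walk.not_isCycle_nil hc).elim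
  · exact ⟨u, _, hc.rotate (u := .inl u) (by simp), Walk.length_rotate ..⟩
  · exact (not_adj_inr_inr h).elim

theorem hasHexagon_of_isCycle {u : Fin r × ZMod q}
    {c : (tannerGraph q r a S).Walk (.inl u) (.inl u)} (hc : c.IsCycle) (h6 : c.length = 6) : HasHexagon a S := by
  have hnd := hc.support_nodup
  rcases c with _ | @⟨_, w₁, _, h₁, _ | @⟨_, w₂, _, h₂, _ | @⟨_, w₃, _, h₃, _ | @⟨_, w₄, _, h₄,
    _ | @⟨_, w₅, _, h₅, _ | @⟨_, _, _, h₆, _ | _⟩⟩⟩⟩⟩⟩ <;>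
    simp only [Walk.length_cons, Walk.length_nil, zero_add, Nat.reduceAdd, Nat.reduceEqDiff,
      OfNat.zero_ne_ofNat, OfNat.one_ne_ofNat] at h6
  obtain ⟨⟨j₁, y₁⟩, rfl⟩ := exists_eq_inr_of_adj_inl h₁
  obtain ⟨⟨i₂, x₂⟩, rfl⟩ := exists_eq_inl_of_adj_inr h₂
  obtain ⟨⟨j₂, y₂⟩, rfl⟩ := exists_eq_inr_of_adj_inl h₃
  obtain ⟨⟨i₃, x₃⟩, rfl⟩ := exists_eq_inl_of_adj_inr h₄
  obtain ⟨⟨j₃, y₃⟩, rfl⟩ := exists_eq_inr_of_adj_inl h₅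
  obtain ⟨i₁, x₁⟩ := u
  simp only [Walk.support_cons, Walk.support_nil, List.tail_cons,
    List.nodup_cons, List.mem_cons, List.not_mem_nil, List.nodup_nil, not_or, Sum.inl.injEq,
    Sum.inr.injEq, reduceCtorEq, not_false_eq_true, true_and, and_true] at hnd
  obtain ⟨⟨n₁₂, n₁₃⟩, ⟨m₂₃, m₂₁⟩, n₂₃, m₃₁⟩ := hnd
  refine ⟨i₁, i₂, i₃, block_row_ne_of_adj_of_adj h₁ h₂.symm (Ne.symm m₂₁),
    block_row_ne_of_adj_of_adj h₃ h₄.symm m₂₃, block_row_ne_of_adj_of_adj h₆.symm h₅ (Ne.symm m₃₁),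
    j₁, j₁.2, j₂, j₂.2, j₃, j₃.2, label_ne_of_adj_of_adj h₂.symm h₃ n₁₂,
    label_ne_of_adj_of_adj h₄.symm h₅ n₂₃, label_ne_of_adj_of_adj h₁ h₆.symm n₁₃, ?_⟩
  rw [adj_inl_inr] at h₁ h₃ h₅
  rw [adj_inr_inl] at h₂ h₄ h₆
  linear_combination h₂ - h₁ + h₄ - h₃ + h₆ - h₅

theorem exists_isCycle_of_hasHexagon (h : HasHexagon a S) :
    ∃ v, ∃ c : (tannerGraph q r a S).Walk v v, c.IsCycle ∧ c.length = 6 := by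
  obtain ⟨i₁, i₂, i₃, hi₁₂, hi₂₃, hi₁₃, j₁, hj₁, j₂, hj₂, j₃, hj₃, hj₁₂, hj₂₃, hj₁₃, hsum⟩ := h
  -- Positions are forced by the first five edges; the closing edge is exactly `hsum`.
  set x₂ := (a i₁ - a i₂) * j₁
  set x₃ := x₂ + (a i₂ - a i₃) * j₂
  have h₁ : (tannerGraph q r a S).Adj (.inl (i₁, 0)) (.inr (⟨j₁, hj₁⟩, a i₁ * j₁)) := by
    rw [adj_inl_inr, zero_add]
  have h₂ : (tannerGraph q r a S).Adj (.inr (⟨j₁, hj₁⟩, a i₁ * j₁)) (.inl (i₂, x₂)) := by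
    rw [adj_inr_inl]; ring
  have h₃ : (tannerGraph q r a S).Adj (.inl (i₂, x₂)) (.inr (⟨j₂, hj₂⟩, x₂ + a i₂ * j₂)) := rfl
  have h₄ : (tannerGraph q r a S).Adj (.inr (⟨j₂, hj₂⟩, x₂ + a i₂ * j₂)) (.inl (i₃, x₃)) := by
    rw [adj_inr_inl]; ring
  have h₅ : (tannerGraph q r a S).Adj (.inl (i₃, x₃)) (.inr (⟨j₃, hj₃⟩, x₃ + a i₃ * j₃)) := rfl
  have h₆ : (tannerGraph q r a S).Adj (.inr (⟨j₃, hj₃⟩, x₃ + a i₃ * j₃)) (.inl (i₁, 0)) := by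
    rw [adj_inr_inl]; linear_combination hsum
  refine ⟨_, .cons h₁ (.cons h₂ (.cons h₃ (.cons h₄ (.cons h₅ (.cons h₆ .nil))))), ?_, rfl⟩
  rw [Walk.cons_isCycle_iff, Walk.isPath_def]
  simp [hi₁₂, hi₂₃, hi₁₃, hi₁₂.symm, hi₁₃.symm, hj₁₂, hj₂₃, hj₁₃]

theorem exists_isCycle_length_six_iff :
    (∃ v, ∃ c : (tannerGraph q r a S).Walk v v, c.IsCycle ∧ c.length = 6) ↔ HasHexagon a S := by
  refine ⟨fun ⟨_, c, hc, h6⟩ ↦ ?_, exists_isCycle_of_hasHexagon⟩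
  obtain ⟨u, c', hc', hl⟩ := exists_isCycle_inl_of_isCycle hc
  exact hasHexagon_of_isCycle hc' (hl.trans h6)

end tannerGraph

theorem pac_r3_six_cycle_iff_general (q : ℕ) (hq : q.Prime)
    (a : Fin 3 → ZMod q) (a₀ d : ZMod q) (hd : d ≠ 0)
    (hAP : ∀ i : Fin 3, a i = a₀ + (i : ℕ) * d)
    (S : Finset (ZMod q)) :
    (∃ (v : (Fin 3 × ZMod q) ⊕ ({j // j ∈ S} × ZMod q))
        (c : (tannerGraph q 3 a S).Walk v v), c.IsCycle ∧ c.length = 6) ↔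
      ∃ i ∈ S, ∃ j ∈ S, ∃ k ∈ S, i ≠ j ∧ i ≠ k ∧ j ≠ k ∧
        -2 * i + j + k = 0 := by
  have : Fact q.Prime := ⟨hq⟩
  rw [tannerGraph.exists_isCycle_length_six_iff, hasHexagon_iff_of_arithProg hd hAP]

/-- Let `C` be a (possibly shortened) proper array code with modulus
`q` (an odd prime), three block-rows whose labels form an arithmetic progression
`a i = a₀ + i·d` with common difference `d ≢ 0 (mod q)` (and distinct labels),
and retained block-column label set `S`.  The Tanner graph of `C` contains a
cycle of length six iff there are three distinct labels `i, j, k ∈ S` with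
`-2i + j + k ≡ 0 (mod q)`. -/
theorem pac_r3_six_cycle_iff (q : ℕ) (hq : q.Prime) (hqodd : Odd q)
    (a : Fin 3 → ZMod q) (a₀ d : ZMod q) (hd : d ≠ 0)
    (hAP : ∀ i : Fin 3, a i = a₀ + (i : ℕ) * d) (ha : Function.Injective a)
    (S : Finset (ZMod q)) :
    (∃ (v : (Fin 3 × ZMod q) ⊕ ({j // j ∈ S} × ZMod q))
        (c : (tannerGraph q 3 a S).Walk v v), c.IsCycle ∧ c.length = 6) ↔
      ∃ i ∈ S, ∃ j ∈ S, ∃ k ∈ S, i ≠ j ∧ i ≠ k ∧ j ≠ k ∧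
        -2 * i + j + k = 0 :=
  pac_r3_six_cycle_iff_general q hq a a₀ d hd hAP S
end

section
/- Let H be the parity-check matrix of a proper array code with modulus q consisting of three block-rows, and let A be the 3q × mq matrix obtained by deleting some q − m block-columns from H. The shortened array code with parity-check matrix A has girth at least eight if and only if the set of labels of the block-columns retained in A is non-averaging over Z_q. -/
/-- A set `S ⊆ ZMod q` is `c`-non-averaging over `Z_q` if `x + c·y ≡ (c+1)·z (mod q)`
with `x, y, z ∈ S` implies `x = y = z`.  (`1`-non-averaging = non-averaging.) -/
def CNonAveraging {q : ℕ} (c : ℕ) (S : Finset (ZMod q)) : Prop :=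
  ∀ x ∈ S, ∀ y ∈ S, ∀ z ∈ S, x + (c : ZMod q) * y = ((c : ZMod q) + 1) * z → x = z ∧ y = z

/-!
The Tanner graph is bipartite, so its girth is at least eight iff it has no cycle of length four
or six. Every block is a permutation matrix, so distinct neighbours of a vertex lie in distinct
blocks. A 4-cycle through block-rows `i ≠ i'` and block-columns `j ≠ j'` would therefore force
`(a i - a i') * (j - j') = 0`, which distinct labels modulo a prime exclude. A 6-cycle through
block-rows `i₁, i₂, i₃` and block-columns `j₁, j₂, j₃` exists iff the shifts cancel around it:
`a i₁ * j₁ - a i₂ * j₁ + a i₂ * j₂ - a i₃ * j₂ + a i₃ * j₃ - a i₁ * j₃ = 0`. For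
`a i = a₀ + i * d` this is `d` times `x + y - 2 * z` (up to sign), where `z` is the block-column
joining block-rows `0` and `2`; conversely every average `x + y = 2 * z` with `x, y, z` not all
equal closes such a 6-cycle, the three labels being distinct because `2` is invertible for odd `q`.
-/

namespace SimpleGraph

variable {V : Type*} {G : SimpleGraph V}

theorem IsBipartite.eight_le_egirth_iff (hG : G.IsBipartite) :
    8 ≤ G.egirth ↔ ∀ v (c : G.Walk v v), c.IsCycle → c.length ≠ 4 ∧ c.length ≠ 6 := by
  rw [le_egirth]
  refine forall₂_congr fun v c => imp_congr_right fun hc => ?_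
  obtain ⟨k, hk⟩ := two_colorable_iff_forall_loop_even.1 hG v c
  have := hc.three_le_length
  norm_cast
  omega

namespace Walk.IsCycle

variable {v : V} {c : G.Walk v v}

theorem getVert_ne_getVert (hc : c.IsCycle) {k l : ℕ} (hk : 1 ≤ k) (hkl : k < l)
    (hl : l ≤ c.length) : c.getVert k ≠ c.getVert l := fun h =>
  hkl.ne (hc.getVert_injOn ⟨hk, by omega⟩ ⟨by omega, hl⟩ h)

theorem exists_square (hc : c.IsCycle) (h4 : c.length = 4) :
    ∃ v₁ v₂ v₃, G.Adj v v₁ ∧ G.Adj v₁ v₂ ∧ G.Adj v₂ v₃ ∧ G.Adj v₃ v ∧ v ≠ v₂ ∧ v₁ ≠ v₃ := by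
  have hadj (k : ℕ) (hk : k < 4) := c.adj_getVert_succ (h4 ▸ hk)
  have hne {k l : ℕ} (hk : 1 ≤ k) (hkl : k < l) (hl : l ≤ 4) :=
    hc.getVert_ne_getVert hk hkl (h4 ▸ hl)
  have hend : c.getVert 4 = v := h4 ▸ c.getVert_length
  refine ⟨c.getVert 1, c.getVert 2, c.getVert 3, by simpa using hadj 0 (by omega),
    hadj 1 (by omega), hadj 2 (by omega), by simpa [hend] using hadj 3 (by omega),
    by simpa [hend] using (hne (k := 2) (by omega) (by omega) le_rfl).symm,
    hne le_rfl (by omega) (by omega)⟩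

theorem exists_hexagon (hc : c.IsCycle) (h6 : c.length = 6) :
    ∃ v₁ v₂ v₃ v₄ v₅, G.Adj v v₁ ∧ G.Adj v₁ v₂ ∧ G.Adj v₂ v₃ ∧ G.Adj v₃ v₄ ∧ G.Adj v₄ v₅ ∧
      G.Adj v₅ v ∧ v ≠ v₂ ∧ v₂ ≠ v₄ ∧ v₄ ≠ v ∧ v₁ ≠ v₃ ∧ v₃ ≠ v₅ ∧ v₅ ≠ v₁ := by
  have hadj (k : ℕ) (hk : k < 6) := c.adj_getVert_succ (h6 ▸ hk)
  have hne {k l : ℕ} (hk : 1 ≤ k) (hkl : k < l) (hl : l ≤ 6) :=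
    hc.getVert_ne_getVert hk hkl (h6 ▸ hl)
  have hend : c.getVert 6 = v := h6 ▸ c.getVert_length
  refine ⟨c.getVert 1, c.getVert 2, c.getVert 3, c.getVert 4, c.getVert 5,
    by simpa using hadj 0 (by omega), hadj 1 (by omega), hadj 2 (by omega), hadj 3 (by omega),
    hadj 4 (by omega), by simpa [hend] using hadj 5 (by omega),
    by simpa [hend] using (hne (k := 2) (by omega) (by omega) le_rfl).symm,
    hne (by omega) (by omega) (by omega),
    by simpa [hend] using hne (k := 4) (by omega) (by omega) le_rfl,
    hne le_rfl (by omega) (by omega),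
    hne (by omega) (by omega) (by omega), (hne le_rfl (by omega) (by omega)).symm⟩

end Walk.IsCycle

theorem exists_isCycle_of_hexagon {v₀ v₁ v₂ v₃ v₄ v₅ : V} (h₀₁ : G.Adj v₀ v₁) (h₁₂ : G.Adj v₁ v₂)
    (h₂₃ : G.Adj v₂ v₃) (h₃₄ : G.Adj v₃ v₄) (h₄₅ : G.Adj v₄ v₅) (h₅₀ : G.Adj v₅ v₀)
    (hnd : [v₀, v₁, v₂, v₃, v₄, v₅].Nodup) :
    ∃ c : G.Walk v₀ v₀, c.IsCycle ∧ c.length = 6 := by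
  refine ⟨.cons h₀₁ (.cons h₁₂ (.cons h₂₃ (.cons h₃₄ (.cons h₄₅ (.cons h₅₀ .nil))))), ?_, rfl⟩
  rw [Walk.isCycle_iff_isPath_tail_and_le_length, Walk.isPath_def]
  refine ⟨?_, by simp⟩
  simpa using (List.nodup_rotate (l := [v₀, v₁, v₂, v₃, v₄, v₅]) (n := 1)).2 hnd

end SimpleGraph

open SimpleGraph

section TannerGraph

variable {q r : ℕ} {a : Fin r → ZMod q} {S : Finset (ZMod q)}

@[simp] lemma tannerGraph_adj_inl_inr {i : Fin r} {x : ZMod q} {j : {j // j ∈ S}} {y : ZMod q} :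
    (tannerGraph q r a S).Adj (.inl (i, x)) (.inr (j, y)) ↔ y = x + a i * j :=
  Iff.rfl

@[simp] lemma tannerGraph_adj_inr_inl {i : Fin r} {x : ZMod q} {j : {j // j ∈ S}} {y : ZMod q} :
    (tannerGraph q r a S).Adj (.inr (j, y)) (.inl (i, x)) ↔ y = x + a i * j :=
  Iff.rfl

@[simp] lemma tannerGraph_not_adj_inl_inl {u u' : Fin r × ZMod q} :
    ¬ (tannerGraph q r a S).Adj (.inl u) (.inl u') :=
  id

@[simp] lemma tannerGraph_not_adj_inr_inr {w w' : {j // j ∈ S} × ZMod q} :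
    ¬ (tannerGraph q r a S).Adj (.inr w) (.inr w') :=
  id

lemma tannerGraph_isBipartite : (tannerGraph q r a S).IsBipartite :=
  IsBipartiteWith.isBipartite (s := Set.range Sum.inl) (t := Set.range Sum.inr)
    ⟨Set.isCompl_range_inl_range_inr.disjoint, by rintro (_ | _) (_ | _) h <;> simp_all⟩

lemma tannerGraph_injOn_neighborSet (w : (Fin r × ZMod q) ⊕ ({j // j ∈ S} × ZMod q)) :
    Set.InjOn (Sum.map Prod.fst Prod.fst) ((tannerGraph q r a S).neighborSet w) := by
  rcases w with ⟨i, x⟩ | ⟨j, y⟩ <;>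
    rintro (⟨i₁, x₁⟩ | ⟨j₁, y₁⟩) h₁ (⟨i₂, x₂⟩ | ⟨j₂, y₂⟩) h₂ h <;>
    simp_all

lemma tannerGraph_exists_isCycle_inl {v : (Fin r × ZMod q) ⊕ ({j // j ∈ S} × ZMod q)}
    {c : (tannerGraph q r a S).Walk v v} (hc : c.IsCycle) :
    ∃ i x, ∃ c' : (tannerGraph q r a S).Walk (.inl (i, x)) (.inl (i, x)),
      c'.IsCycle ∧ c'.length = c.length := by
  rcases v with ⟨i, x⟩ | w
  · exact ⟨i, x, c, hc, rfl⟩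
  · have hadj := c.adj_snd hc.not_nil
    rcases hv : c.snd with ⟨i, x⟩ | w'
    · exact ⟨i, x, c.rotate _ (hv ▸ c.getVert_mem_support 1), hc.rotate _, c.length_rotate ..⟩
    · simp [hv] at hadj

lemma tannerGraph_isCycle_length_ne_four [Fact q.Prime] (ha : Function.Injective a)
    {v : (Fin r × ZMod q) ⊕ ({j // j ∈ S} × ZMod q)} {c : (tannerGraph q r a S).Walk v v}
    (hc : c.IsCycle) : c.length ≠ 4 := by
  obtain ⟨i₁, x₁, c', hc', hlen⟩ := tannerGraph_exists_isCycle_inl hc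
  intro h4
  obtain ⟨v₁, v₂, v₃, h₀₁, h₁₂, h₂₃, h₃₀, n₀₂, n₁₃⟩ := hc'.exists_square (hlen.trans h4)
  have hi := fun h => n₀₂ (tannerGraph_injOn_neighborSet v₁ h₀₁.symm h₁₂ h)
  have hj := fun h => n₁₃ (tannerGraph_injOn_neighborSet _ h₀₁ h₃₀.symm h)
  rcases v₁ with _ | ⟨j₁, y₁⟩ <;> rcases v₂ with ⟨i₂, x₂⟩ | _ <;> rcases v₃ with _ | ⟨j₂, y₂⟩ <;>
    simp only [tannerGraph_adj_inl_inr, tannerGraph_adj_inr_inl, tannerGraph_not_adj_inl_inl,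
      tannerGraph_not_adj_inr_inr] at h₀₁ h₁₂ h₂₃ h₃₀
  simp only [Sum.map_inl, Sum.map_inr, Sum.inl.injEq, Sum.inr.injEq] at hi hj
  have : (a i₁ - a i₂) * ((j₁ : ZMod q) - j₂) = 0 := by
    linear_combination h₁₂ - h₀₁ + h₃₀ - h₂₃
  exact mul_ne_zero (sub_ne_zero.2 (ha.ne hi)) (sub_ne_zero.2 (Subtype.val_injective.ne hj)) this

-- The 6-cycle runs `i₁ — j₁ — i₂ — j₂ — i₃ — j₃ — i₁` (block-rows `i`, block-columns `j`).
def HasSixCycleLabels (a : Fin r → ZMod q) (S : Finset (ZMod q)) : Prop :=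
  ∃ i₁ i₂ i₃ : Fin r, ∃ j₁ ∈ S, ∃ j₂ ∈ S, ∃ j₃ ∈ S,
    i₁ ≠ i₂ ∧ i₂ ≠ i₃ ∧ i₃ ≠ i₁ ∧ j₁ ≠ j₂ ∧ j₂ ≠ j₃ ∧ j₃ ≠ j₁ ∧
    a i₁ * j₁ - a i₂ * j₁ + a i₂ * j₂ - a i₃ * j₂ + a i₃ * j₃ - a i₁ * j₃ = 0

lemma hasSixCycleLabels_of_isCycle {v : (Fin r × ZMod q) ⊕ ({j // j ∈ S} × ZMod q)}
    {c : (tannerGraph q r a S).Walk v v} (hc : c.IsCycle) (h6 : c.length = 6) :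
    HasSixCycleLabels a S := by
  obtain ⟨i₁, x₁, c', hc', hlen⟩ := tannerGraph_exists_isCycle_inl hc
  obtain ⟨v₁, v₂, v₃, v₄, v₅, h₀₁, h₁₂, h₂₃, h₃₄, h₄₅, h₅₀, n₀₂, n₂₄, n₄₀, n₁₃, n₃₅, n₅₁⟩ :=
    hc'.exists_hexagon (hlen.trans h6)
  have hinj := tannerGraph_injOn_neighborSet (a := a) (S := S)
  have hi₁₂ := fun h => n₀₂ (hinj v₁ h₀₁.symm h₁₂ h)
  have hi₂₃ := fun h => n₂₄ (hinj v₃ h₂₃.symm h₃₄ h)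
  have hi₃₁ := fun h => n₄₀ (hinj v₅ h₄₅.symm h₅₀ h)
  have hj₁₂ := fun h => n₁₃ (hinj v₂ h₁₂.symm h₂₃ h)
  have hj₂₃ := fun h => n₃₅ (hinj v₄ h₃₄.symm h₄₅ h)
  have hj₃₁ := fun h => n₅₁ (hinj _ h₅₀.symm h₀₁ h)
  rcases v₁ with _ | ⟨j₁, y₁⟩ <;> rcases v₂ with ⟨i₂, x₂⟩ | _ <;>
    rcases v₃ with _ | ⟨j₂, y₂⟩ <;> rcases v₄ with ⟨i₃, x₃⟩ | _ <;>
    rcases v₅ with _ | ⟨j₃, y₃⟩ <;>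
    simp only [tannerGraph_adj_inl_inr, tannerGraph_adj_inr_inl, tannerGraph_not_adj_inl_inl,
      tannerGraph_not_adj_inr_inr] at h₀₁ h₁₂ h₂₃ h₃₄ h₄₅ h₅₀
  simp only [Sum.map_inl, Sum.map_inr, Sum.inl.injEq, Sum.inr.injEq]
    at hi₁₂ hi₂₃ hi₃₁ hj₁₂ hj₂₃ hj₃₁
  refine ⟨i₁, i₂, i₃, j₁, j₁.2, j₂, j₂.2, j₃, j₃.2, hi₁₂, hi₂₃, hi₃₁,
    Subtype.val_injective.ne hj₁₂, Subtype.val_injective.ne hj₂₃, Subtype.val_injective.ne hj₃₁, ?_⟩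
  linear_combination -h₀₁ + h₁₂ - h₂₃ + h₃₄ - h₄₅ + h₅₀

lemma exists_isCycle_of_hasSixCycleLabels (h : HasSixCycleLabels a S) :
    ∃ v, ∃ c : (tannerGraph q r a S).Walk v v, c.IsCycle ∧ c.length = 6 := by
  obtain ⟨i₁, i₂, i₃, j₁, hj₁, j₂, hj₂, j₃, hj₃, hi₁₂, hi₂₃, hi₃₁, hj₁₂, hj₂₃, hj₃₁, hrel⟩ := h
  refine ⟨_, exists_isCycle_of_hexagon (v₀ := .inl (i₁, 0))
    (v₁ := .inr (⟨j₁, hj₁⟩, a i₁ * j₁))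
    (v₂ := .inl (i₂, a i₁ * j₁ - a i₂ * j₁))
    (v₃ := .inr (⟨j₂, hj₂⟩, a i₁ * j₁ - a i₂ * j₁ + a i₂ * j₂))
    (v₄ := .inl (i₃, a i₁ * j₁ - a i₂ * j₁ + a i₂ * j₂ - a i₃ * j₂))
    (v₅ := .inr (⟨j₃, hj₃⟩, a i₁ * j₁ - a i₂ * j₁ + a i₂ * j₂ - a i₃ * j₂ + a i₃ * j₃))
    ?_ ?_ ?_ ?_ ?_ ?_ ?_⟩
  all_goals simp [hi₁₂, hi₂₃, hj₁₂, hj₂₃, hi₃₁.symm, hj₃₁.symm]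
  linear_combination hrel

end TannerGraph

section ProperArrayCode

variable {q : ℕ} {S : Finset (ZMod q)}

lemma not_cNonAveraging_one_of_add_eq_two_mul {x y z : ZMod q} (hx : x ∈ S) (hy : y ∈ S)
    (hz : z ∈ S) (hxz : x ≠ z) (h : x + y = 2 * z) : ¬ CNonAveraging 1 S :=
  fun hS => hxz (hS x hx y hy z hz (by push_cast; linear_combination h)).1

lemma not_cNonAveraging_one_of_hasSixCycleLabels [Fact q.Prime] {a : Fin 3 → ZMod q}
    {a₀ d : ZMod q} (hd : d ≠ 0) (hAP : ∀ i : Fin 3, a i = a₀ + (i : ℕ) * d)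
    (h : HasSixCycleLabels a S) : ¬ CNonAveraging 1 S := by
  obtain ⟨i₁, i₂, i₃, j₁, hj₁, j₂, hj₂, j₃, hj₃, hi₁₂, hi₂₃, hi₃₁, hj₁₂, hj₂₃, hj₃₁, hrel⟩ := h
  have hidx :
      ((i₁ : ℕ) : ZMod q) * (j₁ - j₃) + (i₂ : ℕ) * (j₂ - j₁) + (i₃ : ℕ) * (j₃ - j₂) = 0 := by
    refine (mul_eq_zero.1 ?_).resolve_left hd
    simp only [hAP] at hrel
    linear_combination hrel
  fin_cases i₁ <;> fin_cases i₂ <;> fin_cases i₃ <;> simp at hi₁₂ hi₂₃ hi₃₁ <;> norm_num at hidx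
  · exact not_cNonAveraging_one_of_add_eq_two_mul
      hj₁ hj₂ hj₃ hj₃₁.symm (by linear_combination -hidx)
  · exact not_cNonAveraging_one_of_add_eq_two_mul
      hj₂ hj₃ hj₁ hj₁₂.symm (by linear_combination hidx)
  · exact not_cNonAveraging_one_of_add_eq_two_mul
      hj₁ hj₃ hj₂ hj₁₂ (by linear_combination hidx)
  · exact not_cNonAveraging_one_of_add_eq_two_mul
      hj₁ hj₃ hj₂ hj₁₂ (by linear_combination -hidx)
  · exact not_cNonAveraging_one_of_add_eq_two_mul
      hj₂ hj₃ hj₁ hj₁₂.symm (by linear_combination -hidx)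
  · exact not_cNonAveraging_one_of_add_eq_two_mul
      hj₁ hj₂ hj₃ hj₃₁.symm (by linear_combination hidx)

lemma hasSixCycleLabels_of_not_cNonAveraging_one [Fact q.Prime] (hq : Odd q)
    {a : Fin 3 → ZMod q} {a₀ d : ZMod q} (hAP : ∀ i : Fin 3, a i = a₀ + (i : ℕ) * d)
    (h : ¬ CNonAveraging 1 S) : HasSixCycleLabels a S := by
  simp only [CNonAveraging, not_forall] at h
  obtain ⟨x, hx, y, hy, z, hz, hxyz, hne⟩ := h
  have hxyz : x + y = 2 * z := by push_cast at hxyz; linear_combination hxyz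
  have h2 : (2 : ZMod q) ≠ 0 :=
    Ring.two_ne_zero (by rw [ZMod.ringChar_zmod_n]; exact hq.ne_two_of_dvd_nat dvd_rfl)
  have hxz : x ≠ z := by
    rintro rfl
    exact hne ⟨rfl, by linear_combination hxyz⟩
  have hyz : y ≠ z := by
    rintro rfl
    exact hne ⟨by linear_combination hxyz, rfl⟩
  have hxy : x ≠ y := by
    rintro rfl
    exact hxz (mul_left_cancel₀ h2 (by linear_combination hxyz))
  refine ⟨0, 1, 2, x, hx, y, hy, z, hz, by decide, by decide, by decide, hxy, hyz, hxz.symm, ?_⟩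
  norm_num [hAP]
  linear_combination (-d) * hxyz

end ProperArrayCode

/-- Let `H` be the parity-check matrix of a proper array code with
modulus `q` (an odd prime) consisting of three block-rows (labels in arithmetic
progression with common difference `d ≢ 0`, distinct), and let `A` be obtained
from `H` by deleting all block-columns whose labels are outside `S`.  The
shortened array code with parity-check matrix `A` has girth at least eight iff
`S` is non-averaging over `Z_q`. -/
theorem pac_r3_girth_eight_iff_nonaveraging (q : ℕ) (hq : q.Prime) (hqodd : Odd q)
    (a : Fin 3 → ZMod q) (a₀ d : ZMod q) (hd : d ≠ 0)
    (hAP : ∀ i : Fin 3, a i = a₀ + (i : ℕ) * d) (ha : Function.Injective a)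
    (S : Finset (ZMod q)) :
    8 ≤ (tannerGraph q 3 a S).egirth ↔ CNonAveraging 1 S := by
  have := Fact.mk hq
  rw [tannerGraph_isBipartite.eight_le_egirth_iff]
  constructor
  · intro h
    by_contra hS
    obtain ⟨v, c, hc, h6⟩ :=
      exists_isCycle_of_hasSixCycleLabels (hasSixCycleLabels_of_not_cNonAveraging_one hqodd hAP hS)
    exact (h v c hc).2 h6
  · intro hS v c hc
    exact ⟨tannerGraph_isCycle_length_ne_four ha hc, fun h6 =>
      not_cNonAveraging_one_of_hasSixCycleLabels hd hAP (hasSixCycleLabels_of_isCycle hc h6) hS⟩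
end

section
/- Every shortened array code with modulus q, column-weight r ≥ 2, girth at least eight, and s ≥ 1 retained block-columns in its parity-check matrix satisfies s ≤ 1 + (q−1)/(r−1). -/
/-!
Fix a retained column label `j₀ ∈ S` and a row label `i₀`. Girth eight forbids six-cycles, and
`(a i - a i₀) * (j - j₀) = (a i' - a i₀) * (j' - j₀)` for distinct block-rows `i, i', i₀` and
distinct block-columns `j, j', j₀` would produce one. Together with `ZMod q` being a field, this
makes `(j, i) ↦ (a i - a i₀) * (j - j₀)` an injection of `(S \ {j₀}) × (rows \ {i₀})` into the
`q - 1` nonzero residues, so `(|S| - 1) * (r - 1) ≤ q - 1`.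
-/

open Finset Function SimpleGraph

variable {q r : ℕ} {a : Fin r → ZMod q} {S : Finset (ZMod q)}

theorem tannerGraph_mul_sub_ne_of_le_egirth (hgirth : 8 ≤ (tannerGraph q r a S).egirth)
    {i i' i₀ : Fin r} (hii' : i ≠ i') (hi : i ≠ i₀) (hi' : i' ≠ i₀)
    {j j' j₀ : ZMod q} (hj : j ∈ S) (hj' : j' ∈ S) (hj₀ : j₀ ∈ S)
    (hjj' : j ≠ j') (hj_ne : j ≠ j₀) (hj'_ne : j' ≠ j₀) :
    (a i - a i₀) * (j - j₀) ≠ (a i' - a i₀) * (j' - j₀) := by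
  intro heq
  set G := tannerGraph q r a S
  -- The walk row `i` → column `j` → row `i₀` → column `j'` → row `i'` → column `j₀` → row `i`;
  -- only its last step needs `heq`.
  set y₁ := 0 + a i * j
  set y₂ := (y₁ - a i₀ * j) + a i₀ * j'
  set y₃ := (y₂ - a i' * j') + a i' * j₀
  have h₁ : G.Adj (.inl (i, 0)) (.inr (⟨j, hj⟩, y₁)) := rfl
  have h₂ : G.Adj (.inr (⟨j, hj⟩, y₁)) (.inl (i₀, y₁ - a i₀ * j)) := (sub_add_cancel _ _).symm
  have h₃ : G.Adj (.inl (i₀, y₁ - a i₀ * j)) (.inr (⟨j', hj'⟩, y₂)) := rfl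
  have h₄ : G.Adj (.inr (⟨j', hj'⟩, y₂)) (.inl (i', y₂ - a i' * j')) := (sub_add_cancel _ _).symm
  have h₅ : G.Adj (.inl (i', y₂ - a i' * j')) (.inr (⟨j₀, hj₀⟩, y₃)) := rfl
  have h₆ : G.Adj (.inr (⟨j₀, hj₀⟩, y₃)) (.inl (i, 0)) := by
    change y₃ = 0 + a i * j₀
    linear_combination heq
  let w : G.Walk (.inl (i, 0)) (.inl (i, 0)) :=
    .cons h₁ (.cons h₂ (.cons h₃ (.cons h₄ (.cons h₅ (.cons h₆ .nil)))))
  have hw : w.IsCycle := by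
    refine Walk.isCycle_iff_isPath_tail_and_le_length.mpr ⟨?_, by simp [w]⟩
    simp [w, Walk.isPath_def, Prod.ext_iff, hii'.symm, hi.symm, hi'.symm, hjj', hj_ne, hj'_ne]
  have := hgirth.trans (egirth_le_length hw)
  norm_num [w] at this

theorem tannerGraph_injOn_mul_sub [Fact q.Prime] (ha : Injective a)
    (hgirth : 8 ≤ (tannerGraph q r a S).egirth) (i₀ : Fin r) {j₀ : ZMod q} (hj₀ : j₀ ∈ S) :
    Set.InjOn (fun p : ZMod q × Fin r => (a p.2 - a i₀) * (p.1 - j₀))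
      ↑(S.erase j₀ ×ˢ univ.erase i₀) := by
  rintro ⟨j, i⟩ hp ⟨j', i'⟩ hp' heq
  simp only [coe_product, Set.mem_prod, mem_coe, mem_erase] at hp hp' heq
  obtain ⟨⟨hj_ne, hj⟩, hi, -⟩ := hp
  obtain ⟨⟨hj'_ne, hj'⟩, hi', -⟩ := hp'
  have ha_sub : ∀ {k l}, a k - a l = 0 → k = l := fun h => ha (sub_eq_zero.mp h)
  by_cases hii' : i = i'
  · subst hii'
    have : (a i - a i₀) * (j - j') = 0 := by linear_combination heq
    rcases mul_eq_zero.mp this with h | h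
    · exact absurd (ha_sub h) hi
    · rw [sub_eq_zero.mp h]
  by_cases hjj' : j = j'
  · subst hjj'
    have : (a i - a i') * (j - j₀) = 0 := by linear_combination heq
    rcases mul_eq_zero.mp this with h | h
    · exact absurd (ha_sub h) hii'
    · exact absurd (sub_eq_zero.mp h) hj_ne
  exact absurd heq <|
    tannerGraph_mul_sub_ne_of_le_egirth hgirth hii' hi hi' hj hj' hj₀ hjj' hj_ne hj'_ne

theorem tannerGraph_card_sub_one_mul_le [Fact q.Prime] (ha : Injective a)
    (hgirth : 8 ≤ (tannerGraph q r a S).egirth) (i₀ : Fin r) {j₀ : ZMod q} (hj₀ : j₀ ∈ S) :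
    (S.card - 1) * (r - 1) ≤ q - 1 := by
  have hmaps : ∀ p ∈ S.erase j₀ ×ˢ univ.erase i₀,
      (a p.2 - a i₀) * (p.1 - j₀) ∈ (univ : Finset (ZMod q)).erase 0 := by
    rintro ⟨j, i⟩ hp
    simp only [mem_product, mem_erase] at hp
    exact mem_erase.mpr ⟨mul_ne_zero (sub_ne_zero.mpr fun h => hp.2.1 (ha h))
      (sub_ne_zero.mpr hp.1.1), mem_univ _⟩
  simpa [card_erase_of_mem hj₀] using
    card_le_card_of_injOn _ hmaps (tannerGraph_injOn_mul_sub ha hgirth i₀ hj₀)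

theorem arrayCode_girth_eight_moore_bound_general (q r : ℕ) (hq : q.Prime)
    (hr : 2 ≤ r) (a : Fin r → ZMod q) (ha : Function.Injective a)
    (S : Finset (ZMod q)) (hS : 1 ≤ S.card)
    (hgirth : 8 ≤ (tannerGraph q r a S).egirth) :
    (S.card : ℝ) ≤ 1 + ((q : ℝ) - 1) / ((r : ℝ) - 1) := by
  have : Fact q.Prime := ⟨hq⟩
  obtain ⟨j₀, hj₀⟩ := card_pos.mp hS
  have hcount := tannerGraph_card_sub_one_mul_le ha hgirth ⟨0, by omega⟩ hj₀
  have hr₁ : (0 : ℝ) < r - 1 := by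
    have : (2 : ℝ) ≤ r := by exact_mod_cast hr
    linarith
  rw [← sub_le_iff_le_add', le_div_iff₀ hr₁]
  have := (Nat.cast_le (α := ℝ)).mpr hcount
  push_cast [Nat.cast_sub hS, Nat.cast_sub (by omega : 1 ≤ r), Nat.cast_sub hq.one_le] at this
  exact this

/-- Every shortened array code with modulus `q` (an odd prime),
column-weight `r ≥ 2` (distinct block-row labels), girth at least eight and
`s ≥ 1` retained block-columns satisfies `s ≤ 1 + (q - 1)/(r - 1)`. -/
theorem arrayCode_girth_eight_moore_bound (q r : ℕ) (hq : q.Prime) (hqodd : Odd q)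
    (hr : 2 ≤ r) (a : Fin r → ZMod q) (ha : Function.Injective a)
    (S : Finset (ZMod q)) (hS : 1 ≤ S.card)
    (hgirth : 8 ≤ (tannerGraph q r a S).egirth) :
    (S.card : ℝ) ≤ 1 + ((q : ℝ) - 1) / ((r : ℝ) - 1) :=
  arrayCode_girth_eight_moore_bound_general q r hq hr a ha S hS hgirth
end

section
/- Every shortened array code with modulus q, column-weight r ≥ 2, girth at least ten, and s ≥ 1 retained block-columns in its parity-check matrix satisfies s ≤ ( q + r(2r−3) + √( (q + r(2r−3))² − 4r(r−1)³ ) ) / ( 2r(r−1) ). -/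
/-!
Fix a retained column vertex `(j₀, 0)` of the Tanner graph. The non-backtracking walks of
length `0`, `2` and `4` starting there, of which there are `1 + r(s-1) + r(s-1)(r-1)(s-1)`,
are paths ending at column vertices, and two of them cannot end at the same vertex since
together they would contain a cycle of length at most `8`. So their number is at most `sq`,
the number of column vertices, which rearranges to
`r(r-1)s² - (q + r(2r-3))s + (r-1)² ≤ 0`; the bound is the larger root of this quadratic.
-/

open SimpleGraph Function Finset

namespace SimpleGraph.Walk
variable {V : Type*} {G : SimpleGraph V}

/- The edges of `p` and `q` span a subgraph with two distinct `v`-`w` paths, hence with a cycle,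
and that cycle uses at most `p.length + q.length` edges. -/
theorem IsPath.eq_of_length_add_length_lt_egirth {v w : V} {p q : G.Walk v w}
    (hp : p.IsPath) (hq : q.IsPath) (hlt : ((p.length + q.length : ℕ) : ℕ∞) < G.egirth) :
    p = q := by
  classical
  by_contra hne
  let H : SimpleGraph V := fromEdgeSet {e | e ∈ p.edges ∨ e ∈ q.edges}
  have hpH : ∀ e ∈ p.edges, e ∈ H.edgeSet := fun e he => by
    rw [edgeSet_fromEdgeSet]
    exact ⟨Or.inl he, G.not_isDiag_of_mem_edgeSet (p.edges_subset_edgeSet he)⟩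
  have hqH : ∀ e ∈ q.edges, e ∈ H.edgeSet := fun e he => by
    rw [edgeSet_fromEdgeSet]
    exact ⟨Or.inr he, G.not_isDiag_of_mem_edgeSet (q.edges_subset_edgeSet he)⟩
  have hHG : H ≤ G := fun x y hxy => by
    rcases hxy.1 with he | he
    exacts [p.adj_of_mem_edges he, q.adj_of_mem_edges he]
  have hH : ¬ H.IsAcyclic := fun hacyc => hne <| by
    have := (hacyc.subsingleton_path v w).elim ⟨_, hp.transfer hpH⟩ ⟨_, hq.transfer hqH⟩
    exact ext_support (by simpa using congrArg (fun r : H.Path v w => r.1.support) this)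
  obtain ⟨u, c, hc⟩ : ∃ u, ∃ c : H.Walk u u, c.IsCycle := by simpa [IsAcyclic] using hH
  have hcard : c.length ≤ p.length + q.length := by
    have hsub : c.edges.toFinset ⊆ p.edges.toFinset ∪ q.edges.toFinset := fun e he => by
      have := c.edges_subset_edgeSet (List.mem_toFinset.mp he)
      rw [edgeSet_fromEdgeSet] at this
      simpa using this.1
    calc c.length = c.edges.toFinset.card := by
          rw [List.toFinset_card_of_nodup hc.edges_nodup, length_edges]
      _ ≤ (p.edges.toFinset ∪ q.edges.toFinset).card := Finset.card_le_card hsub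
      _ ≤ p.edges.toFinset.card + q.edges.toFinset.card := Finset.card_union_le _ _
      _ ≤ p.length + q.length := by
          grw [List.toFinset_card_le, List.toFinset_card_le, length_edges, length_edges]
  refine hlt.not_ge ?_
  calc G.egirth ≤ H.egirth := egirth_anti hHG
    _ ≤ c.length := egirth_le_length hc
    _ ≤ _ := by exact_mod_cast hcard

end SimpleGraph.Walk

namespace tannerGraph

variable {q r : ℕ} {a : Fin r → ZMod q} {S : Finset (ZMod q)}

def hop (i : Fin r) (j j' : S) (y : ZMod q) :
    (tannerGraph q r a S).Walk (.inr (j, y)) (.inr (j', y + a i * (j' - j))) :=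
  .cons (v := .inl (i, y - a i * j)) (by change y = _ + _; ring)
    (.cons (by change _ = _ + _; ring) .nil)

lemma isPath_hop {i : Fin r} {j j' : S} (hj : j ≠ j') (y : ZMod q) :
    (hop (a := a) i j j' y).IsPath := by
  simp [hop, Walk.isPath_def, hj]

lemma eq_of_mul_sub_eq (hg : 4 < (tannerGraph q r a S).egirth) {i i' : Fin r} {j j' : S}
    (hj : j ≠ j') (h : a i * (j' - j) = a i' * (j' - j)) : i = i' := by
  have := (isPath_hop hj 0).eq_of_length_add_length_lt_egirth
    (q := (hop i' j j' 0).copy rfl (by rw [h])) (by simpa using isPath_hop hj 0)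
    (by simpa [hop] using hg)
  exact (by simpa [hop] using congrArg Walk.support this : (i = i' ∧ _) ∧ _).1.1

/- Labels of the non-backtracking walks of length `0`, `2` and `4` from column `(j₀, 0)`:
consecutive block-rows differ, and so do consecutive block-columns. -/
abbrev ZigzagLabel (r : ℕ) (j₀ : S) : Type :=
  Unit ⊕ (Fin r × {j // j ≠ j₀}) ⊕ Σ p : Fin r × {j // j ≠ j₀}, {i // i ≠ p.1} × {j // j ≠ (p.2 : S)}

def zigzag (a : Fin r → ZMod q) (j₀ : S) :
    ZigzagLabel r j₀ → Σ c : S × ZMod q, (tannerGraph q r a S).Walk (.inr (j₀, 0)) (.inr c)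
  | .inl () => ⟨_, .nil⟩
  | .inr (.inl (i, j)) => ⟨_, hop i j₀ j.1 0⟩
  | .inr (.inr ⟨(i, j), (i', j')⟩) => ⟨_, (hop i j₀ j.1 0).append (hop i'.1 j.1 j'.1 _)⟩

lemma length_zigzag_le (j₀ : S) (x : ZigzagLabel r j₀) : (zigzag a j₀ x).2.length ≤ 4 := by
  rcases x with _ | _ | _ <;> simp [zigzag, hop]

lemma card_zigzagLabel (j₀ : S) : Fintype.card (ZigzagLabel r j₀) =
    1 + r * (#S - 1) + r * (#S - 1) * ((r - 1) * (#S - 1)) := by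
  simp [Fintype.card_sum, Fintype.card_sigma, add_assoc]

lemma zigzag_support_injective (j₀ : S) :
    Injective fun x : ZigzagLabel r j₀ => (zigzag a j₀ x).2.support := by
  rintro (_ | ⟨i, j⟩ | ⟨⟨i, j⟩, i', j'⟩) (_ | ⟨k, l⟩ | ⟨⟨k, l⟩, k', l'⟩) h <;>
    simp only [zigzag, hop, Walk.cons_append, Walk.nil_append, Walk.support_cons,
      Walk.support_nil, List.cons.injEq, Sum.inl.injEq, Sum.inr.injEq, Prod.mk.injEq,
      Sigma.mk.injEq, reduceCtorEq, and_false] at h ⊢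
  · obtain ⟨-, ⟨rfl, -⟩, ⟨hj, -⟩, -⟩ := h
    exact ⟨rfl, Subtype.ext hj⟩
  · obtain ⟨-, ⟨rfl, -⟩, ⟨hj, -⟩, ⟨hi', -⟩, ⟨hj', -⟩, -⟩ := h
    obtain rfl : j = l := Subtype.ext hj
    exact ⟨⟨rfl, rfl⟩, heq_of_eq (Prod.ext (Subtype.ext hi') (Subtype.ext hj'))⟩

lemma isPath_zigzag (hg : 4 < (tannerGraph q r a S).egirth) (j₀ : S) (x : ZigzagLabel r j₀) :
    (zigzag a j₀ x).2.IsPath := by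
  rcases x with _ | ⟨i, j⟩ | ⟨⟨i, j⟩, i', j'⟩
  · exact .nil
  · exact isPath_hop (Ne.symm j.2) 0
  · have hret : j₀ = j'.1 → 0 ≠ a i * (j - j₀) + a i' * (j' - j) := by
      rintro hj' hy
      refine i'.2 (eq_of_mul_sub_eq hg (Ne.symm j.2) ?_).symm
      rw [← hj'] at hy
      linear_combination -hy
    have hj' : j.1 ≠ j'.1 := Ne.symm j'.2
    simpa [zigzag, hop, Walk.isPath_def, Ne.symm j.2, Ne.symm i'.2, hj'] using hret

lemma zigzag_fst_injective (hg : 8 < (tannerGraph q r a S).egirth) (j₀ : S) :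
    Injective fun x : ZigzagLabel r j₀ => (zigzag a j₀ x).1 := by
  intro x y hxy
  have hg4 : 4 < (tannerGraph q r a S).egirth := lt_trans (by norm_num) hg
  apply zigzag_support_injective (a := a) j₀
  let w := (zigzag a j₀ y).2.copy rfl (congrArg Sum.inr hxy.symm)
  have hlen : (zigzag a j₀ x).2.length + w.length ≤ 8 := by
    simpa [w] using add_le_add (length_zigzag_le (a := a) j₀ x) (length_zigzag_le (a := a) j₀ y)
  have := (isPath_zigzag hg4 j₀ x).eq_of_length_add_length_lt_egirth (q := w)
    (by simpa [w] using isPath_zigzag hg4 j₀ y) (lt_of_le_of_lt (by exact_mod_cast hlen) hg)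
  simpa [w] using congrArg Walk.support this

theorem moore_count_le [NeZero q] (hg : 8 < (tannerGraph q r a S).egirth) (hS : S.Nonempty) :
    1 + r * (#S - 1) + r * (#S - 1) * ((r - 1) * (#S - 1)) ≤ #S * q := by
  obtain ⟨j₀, hj₀⟩ := hS
  calc _ = Fintype.card (ZigzagLabel r (⟨j₀, hj₀⟩ : S)) := (card_zigzagLabel _).symm
    _ ≤ Fintype.card (S × ZMod q) := Fintype.card_le_of_injective _ (zigzag_fst_injective hg _)
    _ = #S * q := by simp [ZMod.card]

end tannerGraph

lemma le_div_of_quadratic_nonpos {A B C x : ℝ} (hA : 0 < A) (h : A * x ^ 2 - B * x + C ≤ 0) :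
    x ≤ (B + √(B ^ 2 - 4 * A * C)) / (2 * A) := by
  rw [le_div_iff₀ (by positivity)]
  have hdisc : (2 * A * x - B) ^ 2 ≤ B ^ 2 - 4 * A * C := by nlinarith
  linarith [le_abs_self (2 * A * x - B), Real.abs_le_sqrt hdisc]

theorem arrayCode_girth_ten_moore_bound_general (q r : ℕ) (hq : q.Prime)
    (hr : 2 ≤ r) (a : Fin r → ZMod q)
    (S : Finset (ZMod q)) (hS : 1 ≤ S.card)
    (hgirth : 10 ≤ (tannerGraph q r a S).egirth) :
    (S.card : ℝ) ≤
      ((q : ℝ) + r * (2 * r - 3) +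
        Real.sqrt (((q : ℝ) + r * (2 * r - 3)) ^ 2 - 4 * r * ((r : ℝ) - 1) ^ 3)) /
      (2 * r * ((r : ℝ) - 1)) := by
  have : NeZero q := ⟨hq.ne_zero⟩
  have hcount := tannerGraph.moore_count_le (lt_of_lt_of_le (by norm_num) hgirth)
    (Finset.card_pos.mp hS)
  have hr' : (2 : ℝ) ≤ r := by exact_mod_cast hr
  have hquad : (r * (r - 1) : ℝ) * (#S : ℝ) ^ 2 - (q + r * (2 * r - 3)) * #S + (r - 1) ^ 2 ≤ 0 := by
    have := (Nat.cast_le (α := ℝ)).mpr hcount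
    push_cast [Nat.cast_sub hS, Nat.cast_sub (by omega : 1 ≤ r)] at this
    linarith
  rw [show 4 * (r : ℝ) * (r - 1) ^ 3 = 4 * (r * (r - 1)) * (r - 1) ^ 2 by ring,
    show 2 * (r : ℝ) * (r - 1) = 2 * (r * (r - 1)) by ring]
  exact le_div_of_quadratic_nonpos (by nlinarith) hquad

/-- Every shortened array code with modulus `q` (an odd prime),
column-weight `r ≥ 2` (distinct block-row labels), girth at least ten and
`s ≥ 1` retained block-columns satisfies
`s ≤ (q + r(2r-3) + √((q + r(2r-3))² - 4r(r-1)³)) / (2r(r-1))`. -/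
theorem arrayCode_girth_ten_moore_bound (q r : ℕ) (hq : q.Prime) (hqodd : Odd q)
    (hr : 2 ≤ r) (a : Fin r → ZMod q) (ha : Function.Injective a)
    (S : Finset (ZMod q)) (hS : 1 ≤ S.card)
    (hgirth : 10 ≤ (tannerGraph q r a S).egirth) :
    (S.card : ℝ) ≤
      ((q : ℝ) + r * (2 * r - 3) +
        Real.sqrt (((q : ℝ) + r * (2 * r - 3)) ^ 2 - 4 * r * ((r : ℝ) - 1) ^ 3)) /
      (2 * r * ((r : ℝ) - 1)) :=
  arrayCode_girth_ten_moore_bound_general q r hq hr a S hS hgirth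
end

section
/- Let G be a bipartite simple graph with nonempty vertex parts L and R such that every vertex in L has degree d_L ≥ 2 and every vertex in R has degree d_R ≥ 2, and suppose every cycle of G has length at least g, where g ≥ 4 is an even integer. Then |L| ≥ Σ_{i=0}^{g/2−1} (d_R − 1)^{⌈i/2⌉} (d_L − 1)^{⌊i/2⌋} and |R| ≥ Σ_{i=0}^{g/2−1} (d_L − 1)^{⌈i/2⌉} (d_R − 1)^{⌊i/2⌋}. -/
/-!
Fix an edge `uv` with `u ∈ L`. The vertices at distance `k` from `u` and `k + 1` from `v`
(`halfLevel u v k`) form the `k`-th level of the tree hanging from `u` away from `v`. Two distinct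
paths with the same ends whose lengths add up to less than the girth would contain a short cycle,
so below half the girth shortest paths are unique: a vertex of level `k` has at most one
neighbour outside level `k + 1`, and a vertex of level `k + 1` has only one neighbour in level
`k`. Double counting gives `#level (k + 1) ≥ (deg - 1) * #level k`. The levels alternate between
`L` and `R`, and for `i < g / 2` the sets `halfLevel u v i` (`i` even) and `halfLevel v u i`
(`i` odd) are disjoint subsets of `L` whose sizes bound the summands from above.
-/

open Finset

namespace SimpleGraph

variable {V : Type*} {G : SimpleGraph V}

theorem Walk.IsPath.eq_of_length_add_length_lt_egirth_s15 {u v : V} {p q : G.Walk u v}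
    (hp : p.IsPath) (hq : q.IsPath) (h : (p.length + q.length : ℕ) < G.egirth) : p = q := by
  by_contra hne
  obtain ⟨_, _, p', q', hp', hq', hc⟩ := hp.exists_isCycle_of_ne hq hne
  have hcyc := G.egirth_le_length hc
  have hp'p := Walk.length_le_of_isSubwalk hp'
  have hq'q := Walk.length_le_of_isSubwalk hq'
  rw [Walk.length_append, Walk.length_reverse] at hcyc
  exact (hcyc.trans (by norm_cast; omega)).not_gt h

theorem Adj.dist_le_dist_add_one {r x y : V} (h : G.Adj x y) : G.dist r y ≤ G.dist r x + 1 := by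
  simpa [dist_eq_one_iff_adj.mpr h] using h.reachable.dist_triangle_right r

theorem exists_isPath_concat_of_dist_le {r x y : V} (hyx : G.Adj y x) (hr : G.Reachable r y)
    (hle : G.dist r y ≤ G.dist r x) :
    ∃ q : G.Walk r y, q.length = G.dist r y ∧ (q.concat hyx).IsPath := by
  classical
  obtain ⟨q, hq, hlen⟩ := hr.exists_path_of_dist
  refine ⟨q, hlen, hq.concat (fun hx => ?_) hyx⟩
  have := q.length_takeUntil_lt_length hx hyx.ne'
  have := dist_le (q.takeUntil x hx)
  omega

theorem eq_of_adj_of_dist_lt {r x y z : V} (hy : G.Adj y x) (hz : G.Adj z x)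
    (hyx : G.dist r y < G.dist r x) (hzx : G.dist r z < G.dist r x)
    (hg : 2 * G.dist r x < G.egirth) : y = z := by
  have hrx : G.Reachable r x := Reachable.of_dist_ne_zero (by omega)
  obtain ⟨qy, hqy, hpy⟩ :=
    exists_isPath_concat_of_dist_le hy (hrx.trans hy.symm.reachable) hyx.le
  obtain ⟨qz, hqz, hpz⟩ :=
    exists_isPath_concat_of_dist_le hz (hrx.trans hz.symm.reachable) hzx.le
  have heq := hpy.eq_of_length_add_length_lt_egirth_s15 hpz <|
    lt_of_le_of_lt (by simp only [Walk.length_concat]; norm_cast; omega) hg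
  simpa using congrArg Walk.penultimate heq

theorem not_adj_of_dist_eq {r x y : V} (hrx : G.Reachable r x) (h : G.dist r y = G.dist r x)
    (hg : 2 * G.dist r x + 1 < G.egirth) : ¬G.Adj y x := by
  intro hyx
  obtain ⟨qy, hqy, hpy⟩ :=
    exists_isPath_concat_of_dist_le hyx (hrx.trans hyx.symm.reachable) h.le
  obtain ⟨px, hpx, hlx⟩ := hrx.exists_path_of_dist
  have heq := hpy.eq_of_length_add_length_lt_egirth_s15 hpx <|
    lt_of_le_of_lt (by simp only [Walk.length_concat]; norm_cast; omega) hg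
  have := congrArg Walk.length heq
  simp only [Walk.length_concat] at this
  omega

theorem card_filter_dist_ne_succ_le_one [Fintype V] [DecidableRel G.Adj] {r x : V}
    (hrx : G.Reachable r x) (hg : 2 * G.dist r x + 1 < G.egirth) :
    #{y ∈ G.neighborFinset x | G.dist r y ≠ G.dist r x + 1} ≤ 1 := by
  refine card_le_one.mpr fun y hy z hz => ?_
  simp only [mem_filter, mem_neighborFinset] at hy hz
  have hlt : ∀ w, G.Adj x w → G.dist r w ≠ G.dist r x + 1 → G.dist r w < G.dist r x :=
    fun w hw hne => by
      have := hw.dist_le_dist_add_one (r := r)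
      have : G.dist r w ≠ G.dist r x := fun h => not_adj_of_dist_eq hrx h hg hw.symm
      omega
  exact eq_of_adj_of_dist_lt hy.1.symm hz.1.symm (hlt y hy.1 hy.2) (hlt z hz.1 hz.2)
    (lt_of_le_of_lt (by norm_cast; omega) hg)

theorem Walk.mem_of_isBipartiteWith {s t : Set V} (hb : G.IsBipartiteWith s t) {a b : V}
    (p : G.Walk a b) (ha : a ∈ s) :
    (Even p.length → b ∈ s) ∧ (Odd p.length → b ∈ t) := by
  induction p generalizing s t with
  | nil => simpa using ha
  | cons h p ih =>
    have := ih hb.symm (hb.mem_of_mem_adj ha h)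
    simp only [length_cons, Nat.even_add_one, Nat.odd_add_one, Nat.not_even_iff_odd,
      Nat.not_odd_iff_even]
    exact this.symm

variable [Fintype V]

noncomputable def halfLevel (G : SimpleGraph V) (u v : V) (k : ℕ) : Finset V :=
  {w | G.dist u w = k ∧ G.dist v w = k + 1}

theorem mem_halfLevel {u v w : V} {k : ℕ} :
    w ∈ G.halfLevel u v k ↔ G.dist u w = k ∧ G.dist v w = k + 1 := by
  simp [halfLevel]

theorem mem_halfLevel_zero {u v : V} (huv : G.Adj u v) : u ∈ G.halfLevel u v 0 := by
  simp [mem_halfLevel, dist_comm, huv]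

theorem mem_of_mem_halfLevel {s t : Set V} (hb : G.IsBipartiteWith s t) {u v w : V} {k : ℕ}
    (huv : G.Adj u v) (hu : u ∈ s) (hw : w ∈ G.halfLevel u v k) :
    (Even k → w ∈ s) ∧ (Odd k → w ∈ t) := by
  obtain ⟨huw, hvw⟩ := mem_halfLevel.mp hw
  have hrw : G.Reachable v w := Reachable.of_dist_ne_zero (by omega)
  obtain ⟨p, hp⟩ := (huv.reachable.trans hrw).exists_walk_length_eq_dist
  rw [← huw, ← hp]
  exact p.mem_of_isBipartiteWith hb hu

theorem card_halfLevel_succ [DecidableRel G.Adj] {u v : V} (huv : G.Adj u v) {δ k : ℕ}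
    (hδ : ∀ x ∈ G.halfLevel u v k, δ ≤ G.degree x) (hg : 2 * k + 3 < G.egirth) :
    (δ - 1) * #(G.halfLevel u v k) ≤ #(G.halfLevel u v (k + 1)) := by
  rw [mul_comm, ← mul_one #(G.halfLevel u v (k + 1))]
  refine card_mul_le_card_mul G.Adj (fun x hx => ?_) (fun y hy => ?_)
  · obtain ⟨hux, hvx⟩ := mem_halfLevel.mp hx
    have hvx' : G.Reachable v x := Reachable.of_dist_ne_zero (by omega)
    have hbad := card_filter_dist_ne_succ_le_one hvx' (lt_of_le_of_lt (by norm_cast; omega) hg)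
    have hgood : {y ∈ G.neighborFinset x | ¬G.dist v y ≠ G.dist v x + 1} ⊆
        (G.halfLevel u v (k + 1)).bipartiteAbove G.Adj x := by
      intro y hy
      simp only [mem_filter, mem_neighborFinset, not_not] at hy
      have h1 := hy.1.dist_le_dist_add_one (r := u)
      have h2 : G.dist v y ≤ 1 + G.dist u y := by
        simpa [dist_eq_one_iff_adj.mpr huv.symm] using huv.symm.reachable.dist_triangle_left y
      simp only [bipartiteAbove, mem_filter, mem_halfLevel]
      exact ⟨⟨by omega, by omega⟩, hy.1⟩
    have hsplit := card_filter_add_card_filter_not (s := G.neighborFinset x)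
      (p := fun y => G.dist v y ≠ G.dist v x + 1)
    rw [card_neighborFinset_eq_degree] at hsplit
    have := card_le_card hgood
    have := hδ x hx
    omega
  · refine card_le_one.mpr fun x hx x' hx' => ?_
    simp only [bipartiteBelow, mem_filter, mem_halfLevel] at hx hx' hy
    exact eq_of_adj_of_dist_lt (r := u) hx.2 hx'.2 (by omega) (by omega)
      (lt_of_le_of_lt (by norm_cast; omega) hg)

theorem card_halfLevel_ge [DecidableRel G.Adj] {s t : Set V} (hb : G.IsBipartiteWith s t)
    {u v : V} (huv : G.Adj u v) (hu : u ∈ s) {a b : ℕ} (has : ∀ w ∈ s, a ≤ G.degree w)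
    (hbt : ∀ w ∈ t, b ≤ G.degree w) {k : ℕ} (hg : 2 * k + 1 < G.egirth) :
    (a - 1) ^ ((k + 1) / 2) * (b - 1) ^ (k / 2) ≤ #(G.halfLevel u v k) := by
  induction k with
  | zero => simpa using card_pos.mpr ⟨u, mem_halfLevel_zero huv⟩
  | succ k ih =>
    have ih := ih (lt_of_le_of_lt (by norm_cast; omega) hg)
    have hstep {δ : ℕ} (hδ : ∀ x ∈ G.halfLevel u v k, δ ≤ G.degree x) :=
      card_halfLevel_succ huv hδ (lt_of_le_of_lt (by norm_cast) hg)
    rcases Nat.even_or_odd' k with ⟨j, rfl | rfl⟩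
    · calc (a - 1) ^ ((2 * j + 1 + 1) / 2) * (b - 1) ^ ((2 * j + 1) / 2)
          = (a - 1) * ((a - 1) ^ ((2 * j + 1) / 2) * (b - 1) ^ (2 * j / 2)) := by
            rw [show (2 * j + 1 + 1) / 2 = j + 1 by omega, show (2 * j + 1) / 2 = j by omega,
              show 2 * j / 2 = j by omega]
            ring
        _ ≤ (a - 1) * #(G.halfLevel u v (2 * j)) := Nat.mul_le_mul_left _ ih
        _ ≤ _ := hstep fun x hx => has x ((mem_of_mem_halfLevel hb huv hu hx).1 (even_two_mul j))
    · calc (a - 1) ^ ((2 * j + 1 + 1 + 1) / 2) * (b - 1) ^ ((2 * j + 1 + 1) / 2)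
          = (b - 1) * ((a - 1) ^ ((2 * j + 1 + 1) / 2) * (b - 1) ^ ((2 * j + 1) / 2)) := by
            rw [show (2 * j + 1 + 1 + 1) / 2 = j + 1 by omega,
              show (2 * j + 1 + 1) / 2 = j + 1 by omega, show (2 * j + 1) / 2 = j by omega]
            ring
        _ ≤ (b - 1) * #(G.halfLevel u v (2 * j + 1)) := Nat.mul_le_mul_left _ ih
        _ ≤ _ := hstep fun x hx =>
          hbt x ((mem_of_mem_halfLevel hb huv hu hx).2 (odd_two_mul_add_one j))

theorem IsBipartiteWith.sum_le_card_of_two_mul_le_egirth [DecidableRel G.Adj] {L R : Finset V}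
    (hb : G.IsBipartiteWith L R) {u v : V} (huv : G.Adj u v) (hu : u ∈ L) {a b : ℕ}
    (haL : ∀ w ∈ L, a ≤ G.degree w) (hbR : ∀ w ∈ R, b ≤ G.degree w) {m : ℕ}
    (hm : 2 * m ≤ G.egirth) :
    ∑ i ∈ range m, (b - 1) ^ ((i + 1) / 2) * (a - 1) ^ (i / 2) ≤ #L := by
  have hv : v ∈ (R : Set V) := hb.mem_of_mem_adj hu huv
  have hterm : ∀ i ∈ range m, (b - 1) ^ ((i + 1) / 2) * (a - 1) ^ (i / 2) ≤
      #{w ∈ L | min (G.dist u w) (G.dist v w) = i} := by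
    intro i hi
    have hg : 2 * i + 1 < G.egirth :=
      lt_of_lt_of_le (by norm_cast; have := mem_range.mp hi; omega) hm
    rcases Nat.even_or_odd i with he | ho
    · have hsub : G.halfLevel u v i ⊆ {w ∈ L | min (G.dist u w) (G.dist v w) = i} :=
        fun w hw => by
          have := mem_halfLevel.mp hw
          simpa [this] using (mem_of_mem_halfLevel hb huv hu hw).1 he
      calc _ = (a - 1) ^ ((i + 1) / 2) * (b - 1) ^ (i / 2) := by
            rw [mul_comm, show (i + 1) / 2 = i / 2 by have := Nat.even_iff.mp he; omega]
          _ ≤ _ := (card_halfLevel_ge hb huv hu haL hbR hg).trans (card_le_card hsub)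
    · have hsub : G.halfLevel v u i ⊆ {w ∈ L | min (G.dist u w) (G.dist v w) = i} :=
        fun w hw => by
          have := mem_halfLevel.mp hw
          simpa [this] using (mem_of_mem_halfLevel hb.symm huv.symm hv hw).2 ho
      exact (card_halfLevel_ge hb.symm huv.symm hv hbR haL hg).trans (card_le_card hsub)
  calc _ ≤ ∑ i ∈ range m, #{w ∈ L | min (G.dist u w) (G.dist v w) = i} := sum_le_sum hterm
    _ ≤ #L := by
      rw [sum_card_fiberwise_eq_card_filter]
      exact card_filter_le _ _

end SimpleGraph

theorem bipartite_moore_bound_general {V : Type*} [Fintype V]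
    (G : SimpleGraph V) [DecidableRel G.Adj]
    (L R : Finset V) (hdisj : Disjoint L R)
    (hL : L.Nonempty)
    (hbip : ∀ u v : V, G.Adj u v → (u ∈ L ∧ v ∈ R) ∨ (u ∈ R ∧ v ∈ L))
    (dL dR : ℕ) (hdL : 2 ≤ dL)
    (hdegL : ∀ v ∈ L, G.degree v = dL) (hdegR : ∀ v ∈ R, G.degree v = dR)
    (g : ℕ)
    (hcyc : ∀ (v : V) (c : G.Walk v v), c.IsCycle → g ≤ c.length) :
    (∑ i ∈ Finset.range (g / 2), (dR - 1) ^ ((i + 1) / 2) * (dL - 1) ^ (i / 2))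
        ≤ L.card ∧
    (∑ i ∈ Finset.range (g / 2), (dL - 1) ^ ((i + 1) / 2) * (dR - 1) ^ (i / 2))
        ≤ R.card := by
  have hb : G.IsBipartiteWith L R := ⟨Finset.disjoint_coe.mpr hdisj, hbip⟩
  obtain ⟨u, hu⟩ := hL
  obtain ⟨v, huv⟩ := (G.degree_pos_iff_exists_adj u).mp (by rw [hdegL u hu]; omega)
  have hgirth : 2 * ((g / 2 : ℕ) : ℕ∞) ≤ G.egirth :=
    SimpleGraph.le_egirth.mpr fun a c hc => by
      exact_mod_cast (Nat.mul_div_le g 2).trans (hcyc a c hc)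
  exact ⟨hb.sum_le_card_of_two_mul_le_egirth huv hu (fun w hw => (hdegL w hw).ge)
      (fun w hw => (hdegR w hw).ge) hgirth,
    hb.symm.sum_le_card_of_two_mul_le_egirth huv.symm (hb.mem_of_mem_adj hu huv)
      (fun w hw => (hdegR w hw).ge) (fun w hw => (hdegL w hw).ge) hgirth⟩

/-- **Moore bound for bipartite graphs.** Let `G` be a bipartite
simple graph with nonempty parts `L` and `R`, every vertex of `L` of degree
`dL ≥ 2` and every vertex of `R` of degree `dR ≥ 2`, and suppose every cycle of
`G` has length at least `g`, where `g ≥ 4` is even.  Then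
`|L| ≥ Σ_{i=0}^{g/2-1} (dR-1)^⌈i/2⌉ (dL-1)^⌊i/2⌋` and
`|R| ≥ Σ_{i=0}^{g/2-1} (dL-1)^⌈i/2⌉ (dR-1)^⌊i/2⌋`. -/
theorem bipartite_moore_bound {V : Type*} [Fintype V] [DecidableEq V]
    (G : SimpleGraph V) [DecidableRel G.Adj]
    (L R : Finset V) (hdisj : Disjoint L R) (hcover : L ∪ R = Finset.univ)
    (hL : L.Nonempty) (hR : R.Nonempty)
    (hbip : ∀ u v : V, G.Adj u v → (u ∈ L ∧ v ∈ R) ∨ (u ∈ R ∧ v ∈ L))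
    (dL dR : ℕ) (hdL : 2 ≤ dL) (hdR : 2 ≤ dR)
    (hdegL : ∀ v ∈ L, G.degree v = dL) (hdegR : ∀ v ∈ R, G.degree v = dR)
    (g : ℕ) (hg : 4 ≤ g) (hgeven : Even g)
    (hcyc : ∀ (v : V) (c : G.Walk v v), c.IsCycle → g ≤ c.length) :
    (∑ i ∈ Finset.range (g / 2), (dR - 1) ^ ((i + 1) / 2) * (dL - 1) ^ (i / 2))
        ≤ L.card ∧
    (∑ i ∈ Finset.range (g / 2), (dL - 1) ^ ((i + 1) / 2) * (dR - 1) ^ (i / 2))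
        ≤ R.card :=
  bipartite_moore_bound_general G L R hdisj hL hbip dL dR hdL hdegL hdegR g hcyc
end

section
/- Let Ω be a system of ℓ equations of the form Σ_{j=1}^m c_{i,j} u_j = b_i v (i = 1, …, ℓ), where the c_{i,j} and b_i are non-negative integers such that for each i at least two of the c_{i,j} are nonzero and Σ_{j=1}^m c_{i,j} = b_i > 0. Let D = max_{1 ≤ i ≤ ℓ} b_i, let q > D be an integer, let n be a positive integer with nD < q, and set k = ⌊ log q / log(nD + 1) ⌋ (natural logarithm). Then there exists a set S ⊆ [0,q−1] with |S| ≥ ( (n+1)^{k−2} − 1 ) / k such that no equation in Ω has a proper solution over Z_q with all entries in S. -/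
open Finset

lemma bt_split_sum (k B : ℕ) (g : Fin (k+1) → ℕ) :
    ∑ t, g t * B ^ (t : ℕ) = g 0 + B * ∑ i : Fin k, g i.succ * B ^ (i : ℕ) := by
  rw [Fin.sum_univ_succ, Finset.mul_sum]
  simp only [Fin.val_zero, pow_zero, mul_one, Fin.val_succ]
  congr 1
  refine Finset.sum_congr rfl fun i _ => ?_
  ring

lemma bt_rep_inj : ∀ (k B : ℕ) (e f : Fin k → ℕ), (∀ t, e t < B) → (∀ t, f t < B) →
    ∑ t, e t * B ^ (t : ℕ) = ∑ t, f t * B ^ (t : ℕ) → ∀ t, e t = f t := by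
  intro k
  induction k with
  | zero => exact fun B e f _ _ _ t => t.elim0
  | succ k ih =>
    intro B e f he hf hsum t
    rw [bt_split_sum, bt_split_sum] at hsum
    have h0 : e 0 = f 0 := by
      have h1 := congrArg (· % B) hsum
      simpa [Nat.add_mul_mod_self_left, Nat.mod_eq_of_lt (he 0),
        Nat.mod_eq_of_lt (hf 0)] using h1
    have hB : 0 < B := lt_of_le_of_lt (Nat.zero_le _) (he 0)
    have hX : ∑ i : Fin k, e i.succ * B ^ (i:ℕ) = ∑ i : Fin k, f i.succ * B ^ (i:ℕ) := by
      rw [h0] at hsum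
      exact Nat.eq_of_mul_eq_mul_left hB (Nat.add_left_cancel hsum)
    have hrest := ih B (fun i => e i.succ) (fun i => f i.succ)
      (fun i => he _) (fun i => hf _) hX
    exact Fin.cases h0 (fun i => hrest i) t

lemma bt_sum_lt : ∀ (k B : ℕ) (e : Fin k → ℕ), 0 < B → (∀ t, e t < B) →
    ∑ t, e t * B ^ (t : ℕ) < B ^ k := by
  intro k
  induction k with
  | zero => intro B e hB _; simpa using hB
  | succ k ih =>
    intro B e hB he
    rw [bt_split_sum]
    have hX : ∑ i : Fin k, e i.succ * B ^ (i:ℕ) < B ^ k := by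
      simpa using ih B (fun i => e i.succ) hB (fun i => he _)
    have h1 : B * (∑ i : Fin k, e i.succ * B ^ (i:ℕ)) + B ≤ B * B ^ k := by
      have := Nat.mul_le_mul_left B hX
      rw [Nat.mul_succ] at this
      omega
    have h0 := he 0
    rw [pow_succ, mul_comm (B ^ k) B]
    omega

/-- **Behrend-type lemma.** Let `Ω` be a system of `ℓ ≥ 1` equations
`Σ_j c i j * u j = b i * v` with non-negative integer coefficients such that for
each `i` at least two of the `c i j` are nonzero and `Σ_j c i j = b i > 0`.
Let `D = max_i b i`, let `q > D`, let `n > 0` with `n·D < q`, and set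
`k = ⌊log q / log (nD + 1)⌋` (natural log).  Then there is a set
`S ⊆ [0, q-1]` with `|S| ≥ ((n+1)^(k-2) - 1)/k` containing no proper solution
over `Z_q` (a tuple `(u 1, …, u m, v)` of pairwise distinct entries from `S`)
to any equation of `Ω`. -/
theorem behrend_type_avoiding_set (ℓ m : ℕ) (hℓ : 1 ≤ ℓ)
    (c : Fin ℓ → Fin m → ℕ) (b : Fin ℓ → ℕ)
    (hnz : ∀ i, ∃ j₁ j₂ : Fin m, j₁ ≠ j₂ ∧ c i j₁ ≠ 0 ∧ c i j₂ ≠ 0)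
    (hsum : ∀ i, ∑ j, c i j = b i) (hb : ∀ i, 0 < b i)
    (D : ℕ) (hD : D = Finset.univ.sup b)
    (q : ℕ) (hq : D < q) (n : ℕ) (hn : 0 < n) (hnD : n * D < q)
    (k : ℕ) (hk : k = ⌊Real.log q / Real.log (n * D + 1)⌋₊) :
    ∃ S : Finset ℕ, S ⊆ Finset.range q ∧
      (((n : ℝ) + 1) ^ (k - 2) - 1) / (k : ℝ) ≤ (S.card : ℝ) ∧
      ∀ i : Fin ℓ, ¬ ∃ (u : Fin m → ℕ) (v : ℕ),
        (∀ j, u j ∈ S) ∧ v ∈ S ∧ Function.Injective u ∧ (∀ j, u j ≠ v) ∧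
        (∑ j, c i j * u j) ≡ b i * v [MOD q] := by
  set B : ℕ := n * D + 1 with hB
  -- basic facts
  have hD1 : 1 ≤ D := by
    have := Finset.le_sup (f := b) (Finset.mem_univ ⟨0, hℓ⟩)
    rw [← hD] at this
    exact le_trans (hb _) this
  have hB2 : 2 ≤ B := by
    have : 1 ≤ n * D := Nat.one_le_iff_ne_zero.mpr (by positivity)
    omega
  have hBq : B ≤ q := by omega
  rw [show ((n:ℝ) * (D:ℝ) + 1) = (B:ℝ) by push_cast [hB]; ring] at hk
  -- k ≥ 1
  have hlogB : 0 < Real.log B := by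
    apply Real.log_pos
    exact_mod_cast hB2.trans_lt' one_lt_two
  have hk1 : 1 ≤ k := by
    rw [hk]
    apply Nat.le_floor
    rw [Nat.cast_one, le_div_iff₀ hlogB, one_mul]
    apply Real.log_le_log (by positivity)
    exact_mod_cast hBq
  -- B ^ k ≤ q
  have hBkq : B ^ k ≤ q := by
    have h1 : (k:ℝ) ≤ Real.log q / Real.log B := by
      rw [hk]
      apply Nat.floor_le
      positivity
    have h2 : (k:ℝ) * Real.log B ≤ Real.log q := (le_div_iff₀ hlogB).mp h1
    rw [← Real.log_pow] at h2
    have hq0 : (0:ℝ) < q := by exact_mod_cast Nat.lt_of_lt_of_le hD1 hq.le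
    have h3 : ((B:ℝ)) ^ k ≤ q := (Real.log_le_log_iff (by positivity) hq0).mp h2
    exact_mod_cast h3
  classical
  have hnnD : n ≤ n * D := Nat.le_mul_of_pos_right n (by omega)
  -- encoding of digit vectors
  set enc : (Fin k → Fin (n+1)) → ℕ := fun a => ∑ t, (a t : ℕ) * B ^ (t : ℕ) with henc
  have hdig : ∀ (a : Fin k → Fin (n+1)) (t : Fin k), (a t : ℕ) < B := by
    intro a t
    have := (a t).isLt
    omega
  have hencinj : Function.Injective enc := by
    intro a a' h
    funext t
    exact Fin.val_injective (bt_rep_inj k B (fun t => (a t : ℕ)) (fun t => (a' t : ℕ))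
      (hdig a) (hdig a') h t)
  set wt : (Fin k → Fin (n+1)) → ℕ := fun a => ∑ t, (a t : ℕ) ^ 2 with hwtdef
  have hwt : ∀ a, wt a ∈ Finset.range (k * n ^ 2 + 1) := by
    intro a
    rw [Finset.mem_range, Nat.lt_succ_iff]
    calc wt a ≤ ∑ _t : Fin k, n ^ 2 :=
          Finset.sum_le_sum fun t _ => Nat.pow_le_pow_left (Nat.lt_succ_iff.mp (a t).isLt) 2
      _ = k * n ^ 2 := by simp [Finset.sum_const, Finset.card_univ, mul_comm]
  obtain ⟨r, hr_mem, hr_max⟩ := Finset.exists_max_image (Finset.range (k * n^2 + 1))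
      (fun r => (Finset.univ.filter (fun a : Fin k → Fin (n+1) => wt a = r)).card)
      ⟨0, by simp⟩
  set F := Finset.univ.filter (fun a : Fin k → Fin (n+1) => wt a = r) with hF
  have hcount : (n+1)^k ≤ (k * n^2 + 1) * F.card := by
    have h1 : (Finset.univ : Finset (Fin k → Fin (n+1))).card =
        ∑ r' ∈ Finset.range (k*n^2+1),
          (Finset.univ.filter (fun a => wt a = r')).card :=
      Finset.card_eq_sum_card_fiberwise (fun a _ => hwt a)
    have h2 : ∑ r' ∈ Finset.range (k*n^2+1),
        (Finset.univ.filter (fun a => wt a = r')).card ≤ (k*n^2+1) * F.card := by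
      calc _ ≤ ∑ _r' ∈ Finset.range (k*n^2+1), F.card :=
            Finset.sum_le_sum fun r' hr' => hr_max r' hr'
        _ = (k*n^2+1) * F.card := by simp [Finset.sum_const, Finset.card_range]
    have h3 : (Finset.univ : Finset (Fin k → Fin (n+1))).card = (n+1)^k := by
      simp [Finset.card_univ]
    omega
  have hcardS : (F.image enc).card = F.card := Finset.card_image_of_injective F hencinj
  refine ⟨F.image enc, ?_, ?_, ?_⟩
  · -- subset of range q
    intro x hx
    obtain ⟨a, _, rfl⟩ := Finset.mem_image.mp hx
    rw [Finset.mem_range]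
    exact lt_of_lt_of_le (bt_sum_lt k B (fun t => (a t : ℕ)) (by omega) (hdig a)) hBkq
  · -- cardinality bound
    rw [hcardS]
    have hkey : (n+1)^(k-2) - 1 ≤ k * F.card := by
      have hP : ((n+1)^(k-2) - 1) * (k*n^2+1) ≤ k * (n+1)^k := by
        rcases Nat.lt_or_ge k 2 with h2 | h2
        · have : k - 2 = 0 := by omega
          simp [this]
        · have hpow : (n+1)^k = (n+1)^(k-2) * (n+1)^2 := by
            rw [← pow_add]
            congr 1
            omega
          obtain ⟨A, hA⟩ : ∃ A, (n+1)^(k-2) = A + 1 :=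
            ⟨(n+1)^(k-2) - 1, by have := Nat.one_le_pow (k-2) (n+1) (by omega); omega⟩
          rw [hpow, hA]
          simp only [Nat.add_sub_cancel]
          have hstep : A * n^2 + A ≤ (A+1) * (n+1)^2 := by nlinarith
          calc A * (k*n^2+1) = k * (A * n^2) + A := by ring
            _ ≤ k * (A * n^2) + k * A := by
                have : A ≤ k * A := Nat.le_mul_of_pos_left A (by omega)
                omega
            _ = k * (A * n^2 + A) := by ring
            _ ≤ k * ((A+1) * (n+1)^2) := Nat.mul_le_mul_left k hstep
      have hP2 : ((n+1)^(k-2) - 1) * (k*n^2+1) ≤ (k * F.card) * (k*n^2+1) := by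
        calc ((n+1)^(k-2) - 1) * (k*n^2+1) ≤ k * (n+1)^k := hP
          _ ≤ k * ((k*n^2+1) * F.card) := Nat.mul_le_mul_left k hcount
          _ = (k * F.card) * (k*n^2+1) := by ring
      exact Nat.le_of_mul_le_mul_right hP2 (by omega)
    have hk0 : (0:ℝ) < k := by exact_mod_cast hk1
    rw [div_le_iff₀ hk0]
    have hc : (((n+1)^(k-2) - 1 : ℕ) : ℝ) ≤ ((k * F.card : ℕ) : ℝ) := by exact_mod_cast hkey
    have h1 : 1 ≤ (n+1)^(k-2) := Nat.one_le_pow _ _ (by omega)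
    push_cast [h1] at hc
    linarith
  · -- no proper solutions
    rintro i ⟨u, v, hu, hv, huinj, huv, hmod⟩
    have hmem : ∀ x ∈ F.image enc, ∃ a, wt a = r ∧ enc a = x := by
      intro x hx
      obtain ⟨a, ha, rfl⟩ := Finset.mem_image.mp hx
      exact ⟨a, (Finset.mem_filter.mp ha).2, rfl⟩
    choose aOf haw hae using hmem
    set a : Fin m → Fin k → Fin (n+1) := fun j => aOf (u j) (hu j) with hadef
    set y : Fin k → Fin (n+1) := aOf v hv with hydef
    have hau : ∀ j, enc (a j) = u j := fun j => hae (u j) (hu j)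
    have hay : enc y = v := hae v hv
    have hbi : b i ≤ D := hD ▸ Finset.le_sup (Finset.mem_univ i)
    have hdl : ∀ t, ∑ j, c i j * ((a j) t : ℕ) < B := by
      intro t
      have h1 : ∑ j, c i j * ((a j) t : ℕ) ≤ ∑ j, c i j * n :=
        Finset.sum_le_sum fun j _ =>
          Nat.mul_le_mul_left _ (Nat.lt_succ_iff.mp ((a j) t).isLt)
      rw [← Finset.sum_mul, hsum i] at h1
      have h2 : b i * n ≤ D * n := Nat.mul_le_mul_right n hbi
      have h3 : D * n = n * D := Nat.mul_comm D n
      omega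
    have hdr : ∀ t, b i * (y t : ℕ) < B := by
      intro t
      have h1 : b i * (y t : ℕ) ≤ D * n :=
        Nat.mul_le_mul hbi (Nat.lt_succ_iff.mp (y t).isLt)
      have h3 : D * n = n * D := Nat.mul_comm D n
      omega
    have hlhs : ∑ j, c i j * u j = ∑ t, (∑ j, c i j * ((a j) t : ℕ)) * B ^ (t:ℕ) := by
      calc ∑ j, c i j * u j = ∑ j, ∑ t, c i j * (((a j) t : ℕ) * B ^ (t:ℕ)) := by
            refine Finset.sum_congr rfl fun j _ => ?_
            rw [← hau j]
            simp only [henc]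
            rw [Finset.mul_sum]
        _ = ∑ t, ∑ j, c i j * (((a j) t : ℕ) * B ^ (t:ℕ)) := Finset.sum_comm
        _ = ∑ t, (∑ j, c i j * ((a j) t : ℕ)) * B ^ (t:ℕ) := by
            refine Finset.sum_congr rfl fun t _ => ?_
            rw [Finset.sum_mul]
            exact Finset.sum_congr rfl fun j _ => by ring
    have hrhs : b i * v = ∑ t, (b i * (y t : ℕ)) * B ^ (t:ℕ) := by
      rw [← hay]
      simp only [henc]
      rw [Finset.mul_sum]
      exact Finset.sum_congr rfl fun t _ => by ring
    have hltl : ∑ j, c i j * u j < q := by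
      rw [hlhs]
      exact lt_of_lt_of_le (bt_sum_lt k B _ (by omega) hdl) hBkq
    have hltr : b i * v < q := by
      rw [hrhs]
      exact lt_of_lt_of_le (bt_sum_lt k B _ (by omega) hdr) hBkq
    have heq : ∑ j, c i j * u j = b i * v := by
      have h := hmod
      unfold Nat.ModEq at h
      rwa [Nat.mod_eq_of_lt hltl, Nat.mod_eq_of_lt hltr] at h
    rw [hlhs, hrhs] at heq
    have hdigeq : ∀ t, ∑ j, c i j * ((a j) t : ℕ) = b i * (y t : ℕ) :=
      bt_rep_inj k B _ _ hdl hdr heq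
    -- weight facts
    have hrZ : ∀ j, ∑ t, (((a j) t : ℕ) : ℤ)^2 = (r : ℤ) := by
      intro j
      have h := haw (u j) (hu j)
      simp only [hwtdef] at h
      exact_mod_cast h
    have hrYZ : ∑ t, ((y t : ℕ) : ℤ)^2 = (r : ℤ) := by
      have h := haw v hv
      simp only [hwtdef] at h
      exact_mod_cast h
    have hdZ : ∀ t, ∑ j, (c i j : ℤ) * (((a j) t : ℕ) : ℤ)
        = (b i : ℤ) * ((y t : ℕ) : ℤ) := by
      intro t
      exact_mod_cast hdigeq t
    have hbZ : ∑ j, (c i j : ℤ) = (b i : ℤ) := by exact_mod_cast hsum i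
    -- the zero sum
    have hswap : ∑ j, (c i j:ℤ) * ∑ t, (((a j) t:ℕ):ℤ) * ((y t:ℕ):ℤ)
        = (b i:ℤ) * (r:ℤ) := by
      calc ∑ j, (c i j:ℤ) * ∑ t, (((a j) t:ℕ):ℤ) * ((y t:ℕ):ℤ)
          = ∑ j, ∑ t, (c i j:ℤ) * ((((a j) t:ℕ):ℤ) * ((y t:ℕ):ℤ)) := by
            simp_rw [Finset.mul_sum]
        _ = ∑ t, ∑ j, (c i j:ℤ) * ((((a j) t:ℕ):ℤ) * ((y t:ℕ):ℤ)) := Finset.sum_comm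
        _ = ∑ t, (∑ j, (c i j:ℤ) * (((a j) t:ℕ):ℤ)) * ((y t:ℕ):ℤ) := by
            refine Finset.sum_congr rfl fun t _ => ?_
            rw [Finset.sum_mul]
            exact Finset.sum_congr rfl fun j _ => by ring
        _ = ∑ t, ((b i:ℤ) * ((y t:ℕ):ℤ)) * ((y t:ℕ):ℤ) := by
            exact Finset.sum_congr rfl fun t _ => by rw [hdZ t]
        _ = (b i:ℤ) * ∑ t, ((y t:ℕ):ℤ)^2 := by
            rw [Finset.mul_sum]
            exact Finset.sum_congr rfl fun t _ => by ring
        _ = (b i:ℤ) * (r:ℤ) := by rw [hrYZ]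
    have hE : ∑ j, (c i j : ℤ) * (∑ t, ((((a j) t : ℕ):ℤ) - ((y t : ℕ):ℤ))^2) = 0 := by
      have expand : ∀ j : Fin m, ∑ t, ((((a j) t:ℕ):ℤ) - ((y t:ℕ):ℤ))^2
          = 2 * (r:ℤ) - 2 * ∑ t, (((a j) t:ℕ):ℤ) * ((y t:ℕ):ℤ) := by
        intro j
        have h1 : ∀ t : Fin k, ((((a j) t:ℕ):ℤ) - ((y t:ℕ):ℤ))^2
            = (((a j) t:ℕ):ℤ)^2 + ((y t:ℕ):ℤ)^2
              - 2 * ((((a j) t:ℕ):ℤ) * ((y t:ℕ):ℤ)) := fun t => by ring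
        simp_rw [h1]
        rw [Finset.sum_sub_distrib, Finset.sum_add_distrib, hrZ j, hrYZ, ← Finset.mul_sum]
        ring
      calc ∑ j, (c i j : ℤ) * (∑ t, ((((a j) t : ℕ):ℤ) - ((y t : ℕ):ℤ))^2)
          = ∑ j, (2 * (r:ℤ) * (c i j:ℤ)
              - 2 * ((c i j:ℤ) * ∑ t, (((a j) t:ℕ):ℤ) * ((y t:ℕ):ℤ))) := by
            refine Finset.sum_congr rfl fun j _ => ?_
            rw [expand j]
            ring
        _ = 2 * (r:ℤ) * (∑ j, (c i j:ℤ))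
              - 2 * ∑ j, (c i j:ℤ) * ∑ t, (((a j) t:ℕ):ℤ) * ((y t:ℕ):ℤ) := by
            rw [Finset.sum_sub_distrib, ← Finset.mul_sum, ← Finset.mul_sum]
        _ = 0 := by rw [hbZ, hswap]; ring
    obtain ⟨j₁, j₂, hj12, hc1, hc2⟩ := hnz i
    have hterm : ∀ j ∈ (Finset.univ : Finset (Fin m)),
        0 ≤ (c i j:ℤ) * ∑ t, ((((a j) t:ℕ):ℤ) - ((y t:ℕ):ℤ))^2 :=
      fun j _ => mul_nonneg (by positivity) (Finset.sum_nonneg fun t _ => sq_nonneg _)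
    have hzero := (Finset.sum_eq_zero_iff_of_nonneg hterm).mp hE j₁ (Finset.mem_univ j₁)
    have hc1Z : (c i j₁ : ℤ) ≠ 0 := by exact_mod_cast hc1
    have hsq : ∑ t, ((((a j₁) t:ℕ):ℤ) - ((y t:ℕ):ℤ))^2 = 0 := by
      rcases mul_eq_zero.mp hzero with h | h
      · exact absurd h hc1Z
      · exact h
    have hteq : ∀ t : Fin k, (((a j₁) t : ℕ) : ℤ) = ((y t : ℕ) : ℤ) := by
      intro t
      have h := (Finset.sum_eq_zero_iff_of_nonneg
        (fun t _ => sq_nonneg _)).mp hsq t (Finset.mem_univ t)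
      have h2 := pow_eq_zero_iff (n := 2) (by norm_num) |>.mp h
      linarith [sub_eq_zero.mp h2]
    have huv1 : u j₁ = v := by
      rw [← hau j₁, ← hay]
      simp only [henc]
      refine Finset.sum_congr rfl fun t _ => ?_
      have h : ((a j₁) t : ℕ) = (y t : ℕ) := by exact_mod_cast hteq t
      rw [h]
    exact huv j₁ huv1
end

section
/- Let Ω be a system of ℓ equations of the form Σ_{j=1}^m c_{i,j} u_j = b_i v (i = 1, …, ℓ), where the c_{i,j} and b_i are non-negative integers such that for each i at least two of the c_{i,j} are nonzero and Σ_{j=1}^m c_{i,j} = b_i > 0. For each integer q ≥ 1, let s(q;Ω) be the largest cardinality of a subset S ⊆ [0,q−1] such that no equation in Ω has a proper solution over Z_q with all entries in S. Then for every ε > 0, s(q;Ω) / q^{1−ε} → ∞ as q → ∞. -/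
open Finset Filter

set_option maxHeartbeats 1600000


lemma sum_pow_lt' (d : ℕ) (hd : 1 ≤ d) :
    ∀ (n : ℕ) (f : Fin n → ℕ), (∀ k, f k < d) →
      (∑ k : Fin n, f k * d ^ (k : ℕ)) + 1 ≤ d ^ n := by
  intro n
  induction n with
  | zero => intro f _; simp
  | succ n ih =>
    intro f hf
    rw [Fin.sum_univ_succ]
    simp only [Fin.val_succ, Fin.val_zero, pow_zero, mul_one]
    have h1 : ∑ i : Fin n, f i.succ * d ^ ((i:ℕ)+1)
        = d * ∑ i : Fin n, f i.succ * d ^ (i:ℕ) := by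
      rw [Finset.mul_sum]; exact Finset.sum_congr rfl fun i _ => by ring
    rw [h1, pow_succ]
    have h2 := ih (fun i => f i.succ) (fun i => hf i.succ)
    have h3 : f 0 + 1 ≤ d := hf 0
    have h4 : d * ((∑ i : Fin n, f i.succ * d ^ (i:ℕ)) + 1) ≤ d * d ^ n :=
      Nat.mul_le_mul_left d h2
    nlinarith [h4, h3]

lemma digits_unique' (d : ℕ) :
    ∀ (n : ℕ) (f g : Fin n → ℕ), (∀ k, f k < d) → (∀ k, g k < d) →
      (∑ k : Fin n, f k * d ^ (k : ℕ)) = (∑ k : Fin n, g k * d ^ (k : ℕ)) → f = g := by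
  intro n
  induction n with
  | zero => intro f g _ _ _; funext k; exact k.elim0
  | succ n ih =>
    intro f g hf hg h
    rw [Fin.sum_univ_succ, Fin.sum_univ_succ] at h
    simp only [Fin.val_succ, Fin.val_zero, pow_zero, mul_one] at h
    have h1 : ∀ (F : Fin (n+1) → ℕ), ∑ i : Fin n, F i.succ * d ^ ((i:ℕ)+1)
        = d * ∑ i : Fin n, F i.succ * d ^ (i:ℕ) := by
      intro F; rw [Finset.mul_sum]; exact Finset.sum_congr rfl fun i _ => by ring
    rw [h1 f, h1 g] at h
    have hd : 0 < d := lt_of_le_of_lt (Nat.zero_le _) (hf 0)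
    have h0 : f 0 = g 0 := by
      have hm := congrArg (· % d) h
      simpa [Nat.add_mul_mod_self_left, Nat.mod_eq_of_lt (hf 0), Nat.mod_eq_of_lt (hg 0)]
        using hm
    have hAB : (∑ i : Fin n, f i.succ * d ^ (i:ℕ)) = ∑ i : Fin n, g i.succ * d ^ (i:ℕ) := by
      have : d * (∑ i : Fin n, f i.succ * d ^ (i:ℕ)) = d * ∑ i : Fin n, g i.succ * d ^ (i:ℕ) := by
        omega
      exact Nat.eq_of_mul_eq_mul_left hd this
    have htail := ih (fun i => f i.succ) (fun i => g i.succ)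
      (fun i => hf i.succ) (fun i => hg i.succ) hAB
    funext k
    refine Fin.cases ?_ ?_ k
    · exact h0
    · exact fun i => congrFun htail i

lemma behrend_set (B n D : ℕ) (hB : 1 ≤ B) (hD : 1 ≤ D) :
    ∃ S : Finset ℕ, S ⊆ Finset.range ((B * D) ^ n) ∧
      D ^ n ≤ (n * (D - 1) ^ 2 + 1) * S.card ∧
      ∀ (M : ℕ) (cc : Fin M → ℕ) (bb : ℕ), (∑ j, cc j) = bb → bb ≤ B →
        ∀ (u : Fin M → ℕ) (v : ℕ), (∀ j, u j ∈ S) → v ∈ S →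
          (∑ j, cc j * u j) = bb * v → ∀ j, cc j ≠ 0 → u j = v := by
  set d := B * D with hdd
  have hd1 : 1 ≤ d := Nat.one_le_iff_ne_zero.mpr (by positivity)
  have hDd : D ≤ d := Nat.le_mul_of_pos_left D hB
  set vecs : Finset (Fin n → ℕ) := Fintype.piFinset fun _ => Finset.range D with hvecsdef
  have hvecs : ∀ a ∈ vecs, ∀ k, a k < D := by
    intro a ha k
    have := Fintype.mem_piFinset.mp ha k
    simpa using this
  set φ : (Fin n → ℕ) → ℕ := fun a => ∑ k : Fin n, a k * d ^ (k:ℕ) with hφdef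
  set ν : (Fin n → ℕ) → ℕ := fun a => ∑ k : Fin n, (a k)^2 with hνdef
  set K : ℕ := n * (D - 1) ^ 2 + 1 with hKdef
  have hmap : ∀ a ∈ vecs, ν a ∈ Finset.range K := by
    intro a ha
    rw [Finset.mem_range, hKdef, Nat.lt_succ_iff]
    calc ν a ≤ ∑ _k : Fin n, (D-1)^2 :=
          Finset.sum_le_sum fun k _ => Nat.pow_le_pow_left (Nat.le_pred_of_lt (hvecs a ha k)) 2
      _ = n * (D-1)^2 := by simp [Finset.sum_const, Finset.card_univ, mul_comm]
  have hpig : ∃ r ∈ Finset.range K,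
      vecs.card ≤ K * (vecs.filter fun a => ν a = r).card := by
    have hsum : ∑ r ∈ Finset.range K, (vecs.filter fun a => ν a = r).card = vecs.card :=
      (Finset.card_eq_sum_card_fiberwise hmap).symm
    have hne : (Finset.range K).Nonempty := ⟨0, by simp [hKdef]⟩
    have := Finset.exists_le_of_sum_le hne (f := fun _ => vecs.card)
      (g := fun r => K * (vecs.filter fun a => ν a = r).card)
      (by rw [← Finset.mul_sum, hsum, Finset.sum_const, Finset.card_range, smul_eq_mul])
    exact this
  obtain ⟨r, _hr, hfib⟩ := hpig
  set V := vecs.filter fun a => ν a = r with hVdef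
  have hVvecs : ∀ a ∈ V, ∀ k, a k < D := fun a ha => hvecs a (Finset.mem_filter.mp ha).1
  have hVr : ∀ a ∈ V, ν a = r := fun a ha => (Finset.mem_filter.mp ha).2
  have hφinj : Set.InjOn φ V := by
    intro a ha b hb hab
    exact digits_unique' d n a b (fun k => lt_of_lt_of_le (hVvecs a ha k) hDd)
      (fun k => lt_of_lt_of_le (hVvecs b hb k) hDd) hab
  refine ⟨V.image φ, ?_, ?_, ?_⟩
  · intro x hx
    obtain ⟨a, ha, rfl⟩ := Finset.mem_image.mp hx
    rw [Finset.mem_range]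
    have h5 : φ a + 1 ≤ d ^ n := sum_pow_lt' d hd1 n a (fun k => lt_of_lt_of_le (hVvecs a ha k) hDd)
    omega
  · rw [Finset.card_image_of_injOn hφinj]
    have hcard : vecs.card = D ^ n := by
      rw [hvecsdef, Fintype.card_piFinset]
      simp
    omega
  · intro M cc bb hccsum hbbB u v hu hv heq j0 hj0
    have hex : ∀ j, ∃ a ∈ V, φ a = u j := fun j => Finset.mem_image.mp (hu j)
    choose a ha hφa using hex
    obtain ⟨w, hw, hφw⟩ := Finset.mem_image.mp hv
    -- digit bound for combinations
    have hcoefD : ∀ (z : ℕ), z < D → bb * z < d := by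
      intro z hz
      calc bb * z ≤ B * (D-1) := Nat.mul_le_mul hbbB (Nat.le_pred_of_lt hz)
        _ < B * D := (Nat.mul_lt_mul_left hB).mpr (by omega)
    have hPlt : ∀ k, (∑ j, cc j * a j k) < d := by
      intro k
      calc ∑ j, cc j * a j k ≤ ∑ j, cc j * (D-1) :=
            Finset.sum_le_sum fun j _ => Nat.mul_le_mul_left _ (Nat.le_pred_of_lt (hVvecs _ (ha j) k))
        _ = bb * (D-1) := by rw [← Finset.sum_mul, hccsum]
        _ ≤ B * (D-1) := Nat.mul_le_mul_right _ hbbB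
        _ < B * D := (Nat.mul_lt_mul_left hB).mpr (by omega)
    have hQlt : ∀ k, bb * w k < d := fun k => hcoefD _ (hvecs w (Finset.mem_filter.mp hw).1 k)
    -- linearity
    have key1 : ∑ k : Fin n, (∑ j, cc j * a j k) * d ^ (k:ℕ) = ∑ j, cc j * u j := by
      simp_rw [Finset.sum_mul]
      rw [Finset.sum_comm]
      refine Finset.sum_congr rfl fun j _ => ?_
      rw [← hφa j, hφdef]
      simp only
      rw [Finset.mul_sum]
      exact Finset.sum_congr rfl fun k _ => by ring
    have key2 : ∑ k : Fin n, (bb * w k) * d ^ (k:ℕ) = bb * v := by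
      rw [← hφw, hφdef]
      simp only
      rw [Finset.mul_sum]
      exact Finset.sum_congr rfl fun k _ => by ring
    have hvec : (fun k => ∑ j, cc j * a j k) = (fun k => bb * w k) :=
      digits_unique' d n _ _ hPlt hQlt (by rw [key1, key2, heq])
    -- integer part
    have hZvec : ∀ k, ∑ j, (cc j : ℤ) * (a j k : ℤ) = (bb:ℤ) * (w k:ℤ) := by
      intro k
      have := congrFun hvec k
      exact_mod_cast congrArg (Nat.cast : ℕ → ℤ) this
    have hZra : ∀ j, ∑ k : Fin n, (a j k:ℤ)^2 = (r:ℤ) := by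
      intro j
      exact_mod_cast congrArg (Nat.cast : ℕ → ℤ) (hVr _ (ha j))
    have hZrw : ∑ k : Fin n, (w k:ℤ)^2 = (r:ℤ) := by
      exact_mod_cast congrArg (Nat.cast : ℕ → ℤ) (hVr _ hw)
    have hZb : ∑ j, (cc j : ℤ) = (bb:ℤ) := by exact_mod_cast congrArg (Nat.cast : ℕ → ℤ) hccsum
    have expand : ∀ j, ∑ k : Fin n, ((a j k:ℤ) - w k)^2
        = (r:ℤ) + r - 2 * ∑ k : Fin n, (a j k:ℤ) * w k := by
      intro j
      have e1 : ∑ k : Fin n, ((a j k:ℤ) - w k)^2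
          = (∑ k : Fin n, (a j k:ℤ)^2) + (∑ k : Fin n, (w k:ℤ)^2)
            - 2 * ∑ k : Fin n, (a j k:ℤ) * w k := by
        rw [← Finset.sum_add_distrib, Finset.mul_sum, ← Finset.sum_sub_distrib]
        exact Finset.sum_congr rfl fun k _ => by ring
      rw [e1, hZra j, hZrw]
    have swap : ∑ j, (cc j:ℤ) * ∑ k : Fin n, (a j k:ℤ) * w k = (bb:ℤ) * r := by
      simp_rw [Finset.mul_sum]
      rw [Finset.sum_comm]
      have e2 : ∀ k : Fin n, ∑ j, (cc j:ℤ) * ((a j k:ℤ) * w k) = (bb:ℤ) * (w k:ℤ)^2 := by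
        intro k
        calc ∑ j, (cc j:ℤ) * ((a j k:ℤ) * w k) = (∑ j, (cc j:ℤ) * (a j k:ℤ)) * w k := by
              rw [Finset.sum_mul]; exact Finset.sum_congr rfl fun j _ => by ring
          _ = (bb:ℤ) * (w k:ℤ)^2 := by rw [hZvec k]; ring
      rw [Finset.sum_congr rfl fun k _ => e2 k, ← Finset.mul_sum, hZrw]
    have main : ∑ j, (cc j:ℤ) * (∑ k : Fin n, ((a j k:ℤ) - w k)^2) = 0 := by
      calc ∑ j, (cc j:ℤ) * (∑ k : Fin n, ((a j k:ℤ) - w k)^2)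
          = ∑ j, (cc j:ℤ) * ((r:ℤ) + r - 2 * ∑ k : Fin n, (a j k:ℤ) * w k) :=
            Finset.sum_congr rfl fun j _ => by rw [expand j]
        _ = (∑ j, (cc j:ℤ)) * ((r:ℤ) + r) - 2 * ∑ j, (cc j:ℤ) * ∑ k : Fin n, (a j k:ℤ) * w k := by
            rw [Finset.sum_mul, Finset.mul_sum, ← Finset.sum_sub_distrib]
            exact Finset.sum_congr rfl fun j _ => by ring
        _ = 0 := by rw [hZb, swap]; ring
    have hterm := (Finset.sum_eq_zero_iff_of_nonneg
      (fun j _ => mul_nonneg (by positivity) (Finset.sum_nonneg fun k _ => sq_nonneg _))).mp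
      main j0 (Finset.mem_univ _)
    have hcc0 : (0:ℤ) < (cc j0 : ℤ) := by exact_mod_cast Nat.pos_of_ne_zero hj0
    have hsq0 : ∑ k : Fin n, ((a j0 k:ℤ) - w k)^2 = 0 := by
      rcases mul_eq_zero.mp hterm with h | h
      · exact absurd h (by exact_mod_cast hj0)
      · exact h
    have haw : ∀ k, a j0 k = w k := by
      intro k
      have := (Finset.sum_eq_zero_iff_of_nonneg (fun k _ => sq_nonneg _)).mp hsq0 k
        (Finset.mem_univ _)
      have h2 : (a j0 k:ℤ) = (w k:ℤ) := by nlinarith [this]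
      exact_mod_cast h2
    rw [← hφa j0, ← hφw]
    congr 1
    funext k
    exact haw k



/-- Let `Ω` be a system of `ℓ ≥ 1` equations
`Σ_j c i j * u j = b i * v` with non-negative integer coefficients such that for
each `i` at least two of the `c i j` are nonzero and `Σ_j c i j = b i > 0`.
For each `q ≥ 1`, let `s q` be the largest cardinality of a subset of `[0, q-1]`
containing no proper solution over `Z_q` (a tuple of pairwise distinct entries)
to any equation of `Ω`.  Then for every `ε > 0`, `s q / q^(1-ε) → ∞` as
`q → ∞`. -/
theorem avoiding_set_superpolynomial_growth (ℓ m : ℕ) (hℓ : 1 ≤ ℓ)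
    (c : Fin ℓ → Fin m → ℕ) (b : Fin ℓ → ℕ)
    (hnz : ∀ i, ∃ j₁ j₂ : Fin m, j₁ ≠ j₂ ∧ c i j₁ ≠ 0 ∧ c i j₂ ≠ 0)
    (hsum : ∀ i, ∑ j, c i j = b i) (hb : ∀ i, 0 < b i)
    (s : ℕ → ℕ)
    (hs : ∀ q : ℕ, 1 ≤ q →
      IsGreatest {N : ℕ | ∃ S ⊆ Finset.range q, S.card = N ∧
        ∀ i : Fin ℓ, ¬ ∃ (u : Fin m → ℕ) (v : ℕ),
          (∀ j, u j ∈ S) ∧ v ∈ S ∧ Function.Injective u ∧ (∀ j, u j ≠ v) ∧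
          (∑ j, c i j * u j) ≡ b i * v [MOD q]} (s q)) :
    ∀ ε : ℝ, 0 < ε →
      Filter.Tendsto (fun q : ℕ => (s q : ℝ) / (q : ℝ) ^ ((1 : ℝ) - ε))
        Filter.atTop Filter.atTop := by
  intro ε hε
  classical
  set n : ℕ := ⌈(4:ℝ)/ε⌉₊ + 3 with hndef
  have hn3 : 3 ≤ n := by omega
  have hnR : (4:ℝ)/ε ≤ (n:ℝ) := le_trans (Nat.le_ceil _) (by exact_mod_cast Nat.le_add_right _ 3)
  have hnpos : (0:ℝ) < (n:ℝ) := by exact_mod_cast Nat.lt_of_lt_of_le (by norm_num) hn3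
  set B : ℕ := ∑ i, b i with hBdef
  have hbB : ∀ i, b i ≤ B := fun i =>
    Finset.single_le_sum (fun i _ => Nat.zero_le _) (Finset.mem_univ i)
  have hB1 : 1 ≤ B := le_trans (hb ⟨0, hℓ⟩) (hbB ⟨0, hℓ⟩)
  set β : ℝ := (B:ℝ)^(n+1) with hβdef
  have hBR : (1:ℝ) ≤ (B:ℝ) := by exact_mod_cast hB1
  have hβ1 : (1:ℝ) ≤ β := one_le_pow₀ hBR
  have hβpos : (0:ℝ) < β := lt_of_lt_of_le zero_lt_one hβ1
  set cst : ℝ := ((2*(n:ℝ)) * 2^(n-2) * β)⁻¹ with hcstdef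
  have h2npos : (0:ℝ) < 2*(n:ℝ) := by linarith
  have hcstpos : 0 < cst := by
    rw [hcstdef]
    exact inv_pos.mpr (mul_pos (mul_pos h2npos (by positivity)) hβpos)
  -- tendsto of x
  have hdiv : Tendsto (fun q:ℕ => (q:ℝ)/β) atTop atTop := by
    simp_rw [div_eq_inv_mul]
    exact Tendsto.const_mul_atTop (inv_pos.mpr hβpos) tendsto_natCast_atTop_atTop
  have hxt : Tendsto (fun q:ℕ => ((q:ℝ)/β) ^ ((n:ℝ)⁻¹)) atTop atTop :=
    (tendsto_rpow_atTop (inv_pos.mpr hnpos)).comp hdiv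
  have hkey : ∀ᶠ q:ℕ in atTop, cst * (q:ℝ)^(1-ε/2) ≤ (s q : ℝ) := by
    filter_upwards [Filter.eventually_ge_atTop 1, hxt.eventually_ge_atTop 2] with q hq1 hx2
    set x : ℝ := ((q:ℝ)/β) ^ ((n:ℝ)⁻¹) with hxdef
    set D : ℕ := ⌊x⌋₊ with hDdef
    have hx0 : (0:ℝ) ≤ x := by linarith
    have hD1 : 1 ≤ D := Nat.le_floor (by exact_mod_cast (by linarith : (1:ℝ) ≤ x))
    have hDx : x/2 ≤ (D:ℝ) := by
      have := Nat.sub_one_lt_floor x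
      rw [← hDdef] at this
      linarith
    have hDle : (D:ℝ) ≤ x := Nat.floor_le hx0
    have hxq : x ^ (n:ℕ) = (q:ℝ)/β := by
      rw [hxdef, ← Real.rpow_natCast (((q:ℝ)/β) ^ ((n:ℝ)⁻¹)) n,
        ← Real.rpow_mul (by positivity), inv_mul_cancel₀ (ne_of_gt hnpos), Real.rpow_one]
    have hDnq : B^(n+1) * D^n ≤ q := by
      have h1 : (D:ℝ)^n ≤ (q:ℝ)/β := by
        rw [← hxq]; exact pow_le_pow_left₀ (Nat.cast_nonneg D) hDle n
      have h2 : β * (D:ℝ)^n ≤ (q:ℝ) := by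
        calc β * (D:ℝ)^n ≤ β * ((q:ℝ)/β) := mul_le_mul_of_nonneg_left h1 (le_of_lt hβpos)
          _ = (q:ℝ) := mul_div_cancel₀ _ (ne_of_gt hβpos)
      have h3 : ((B^(n+1) * D^n : ℕ):ℝ) ≤ (q:ℝ) := by
        push_cast
        rw [← hβdef] at *
        calc (B:ℝ)^(n+1) * (D:ℝ)^n = β * (D:ℝ)^n := by rw [hβdef]
          _ ≤ (q:ℝ) := h2
      exact_mod_cast h3
    obtain ⟨S, hSsub, hScard, hSavoid⟩ := behrend_set B n D hB1 hD1
    have hBDq : B * (B*D)^n ≤ q := by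
      calc B * (B*D)^n = B^(n+1) * D^n := by ring
        _ ≤ q := hDnq
    have hSq : S ⊆ Finset.range q := by
      intro y hy
      have h4 := Finset.mem_range.mp (hSsub hy)
      rw [Finset.mem_range]
      have h5 : (B*D)^n ≤ B*(B*D)^n := Nat.le_mul_of_pos_left _ hB1
      omega
    have hnosol : ∀ i : Fin ℓ, ¬ ∃ (u : Fin m → ℕ) (v : ℕ),
        (∀ j, u j ∈ S) ∧ v ∈ S ∧ Function.Injective u ∧ (∀ j, u j ≠ v) ∧
        (∑ j, c i j * u j) ≡ b i * v [MOD q] := by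
      rintro i ⟨u, v, hu, hv, _huinj, hunev, hmod⟩
      have hub : ∀ j, u j + 1 ≤ (B*D)^n := fun j => Finset.mem_range.mp (hSsub (hu j))
      have hvb : v + 1 ≤ (B*D)^n := Finset.mem_range.mp (hSsub hv)
      have h1 : (∑ j, c i j * u j) + b i ≤ B * (B*D)^n := by
        have e : ∑ j, (c i j * u j + c i j) ≤ ∑ j, c i j * (B*D)^n :=
          Finset.sum_le_sum fun j _ => by
            calc c i j * u j + c i j = c i j * (u j + 1) := by ring
              _ ≤ c i j * (B*D)^n := Nat.mul_le_mul_left _ (hub j)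
        rw [Finset.sum_add_distrib] at e
        rw [hsum i] at e
        rw [← Finset.sum_mul, hsum i] at e
        calc (∑ j, c i j * u j) + b i ≤ b i * (B*D)^n := e
          _ ≤ B * (B*D)^n := Nat.mul_le_mul_right _ (hbB i)
      have h2 : b i * v + 1 ≤ B * (B*D)^n := by
        have h6 : b i * (v+1) ≤ B * (B*D)^n := Nat.mul_le_mul (hbB i) hvb
        have h7 := hb i
        nlinarith
      have hlt1 : (∑ j, c i j * u j) < q := by have := hb i; omega
      have hlt2 : b i * v < q := by omega
      have heq : (∑ j, c i j * u j) = b i * v := by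
        have h8 := hmod
        unfold Nat.ModEq at h8
        rwa [Nat.mod_eq_of_lt hlt1, Nat.mod_eq_of_lt hlt2] at h8
      obtain ⟨j₁, _j₂, _hj12, hc1, _hc2⟩ := hnz i
      exact hunev j₁ (hSavoid m (c i) (b i) (hsum i) (hbB i) u v hu hv heq j₁ hc1)
    have hsq : S.card ≤ s q := (hs q hq1).2 ⟨S, hSq, rfl, hnosol⟩
    have hK2 : n * (D-1)^2 + 1 ≤ 2*n*D^2 := by
      have h1 : n * (D-1)^2 ≤ n * D^2 :=
        Nat.mul_le_mul_left n (Nat.pow_le_pow_left (by omega) 2)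
      have h2 : 1 ≤ n * D^2 := Nat.mul_pos (by omega) (by positivity)
      nlinarith
    have hcard2 : D^n ≤ 2*n*D^2 * S.card := le_trans hScard (Nat.mul_le_mul_right _ hK2)
    have hDpos : (0:ℝ) < (D:ℝ) := by exact_mod_cast (by omega : 0 < D)
    have hR : (D:ℝ)^(n-2) ≤ 2*(n:ℝ) * (s q : ℝ) := by
      have h1 : (D:ℝ)^n ≤ 2*(n:ℝ)*(D:ℝ)^2 * (s q : ℝ) := by
        have h9 : (D^n : ℕ) ≤ 2*n*D^2 * s q := le_trans hcard2 (Nat.mul_le_mul_left _ hsq)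
        exact_mod_cast h9
      have h2 : (D:ℝ)^n = (D:ℝ)^(n-2) * (D:ℝ)^2 := by
        rw [← pow_add, Nat.sub_add_cancel (by omega : 2 ≤ n)]
      have h3 : (D:ℝ)^(n-2) * (D:ℝ)^2 ≤ (2*(n:ℝ)*(s q : ℝ)) * (D:ℝ)^2 := by
        rw [← h2]
        calc (D:ℝ)^n ≤ 2*(n:ℝ)*(D:ℝ)^2 * (s q : ℝ) := h1
          _ = (2*(n:ℝ)*(s q : ℝ)) * (D:ℝ)^2 := by ring
      exact le_of_mul_le_mul_right h3 (pow_pos hDpos 2)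
    have hchain : (q:ℝ)^(1-ε/2) / (2^(n-2) * β) ≤ (D:ℝ)^(n-2) := by
      have e1 : (x/2)^(n-2) ≤ (D:ℝ)^(n-2) := pow_le_pow_left₀ (by linarith) hDx _
      have e3 : x^(n-2) = ((q:ℝ)/β) ^ (((n:ℝ)-2)/(n:ℝ)) := by
        rw [hxdef, ← Real.rpow_natCast (((q:ℝ)/β) ^ ((n:ℝ)⁻¹)) (n-2),
          ← Real.rpow_mul (by positivity)]
        congr 1
        rw [Nat.cast_sub (by omega : 2 ≤ n)]
        push_cast
        field_simp
      have e4 : ((q:ℝ)/β) ^ (((n:ℝ)-2)/(n:ℝ))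
          = (q:ℝ)^(((n:ℝ)-2)/(n:ℝ)) / β^(((n:ℝ)-2)/(n:ℝ)) :=
        Real.div_rpow (Nat.cast_nonneg q) (by linarith) _
      have e5 : β^(((n:ℝ)-2)/(n:ℝ)) ≤ β := by
        calc β^(((n:ℝ)-2)/(n:ℝ)) ≤ β^(1:ℝ) :=
              Real.rpow_le_rpow_of_exponent_le hβ1 (by rw [div_le_one hnpos]; linarith)
          _ = β := Real.rpow_one β
      have e6 : (q:ℝ)^(1-ε/2) ≤ (q:ℝ)^(((n:ℝ)-2)/(n:ℝ)) := by
        apply Real.rpow_le_rpow_of_exponent_le (by exact_mod_cast hq1)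
        have h4 : (4:ℝ) ≤ ε * (n:ℝ) := by
          have := (div_le_iff₀ hε).mp hnR
          linarith
        rw [le_div_iff₀ hnpos]
        have h5 : (1-ε/2) * (n:ℝ) = (n:ℝ) - (ε*(n:ℝ))/2 := by ring
        linarith
      have hbpow : (0:ℝ) < β^(((n:ℝ)-2)/(n:ℝ)) := Real.rpow_pos_of_pos hβpos _
      calc (q:ℝ)^(1-ε/2) / (2^(n-2) * β)
          ≤ (q:ℝ)^(((n:ℝ)-2)/(n:ℝ)) / (2^(n-2) * β^(((n:ℝ)-2)/(n:ℝ))) := by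
            apply div_le_div₀ (Real.rpow_nonneg (Nat.cast_nonneg q) _) e6
              (by positivity)
            have h10 : (0:ℝ) ≤ (2:ℝ)^(n-2) := by positivity
            exact mul_le_mul_of_nonneg_left e5 h10
        _ = x^(n-2) / 2^(n-2) := by rw [e3, e4]; ring
        _ = (x/2)^(n-2) := (div_pow x 2 (n-2)).symm
        _ ≤ (D:ℝ)^(n-2) := e1
    calc cst * (q:ℝ)^(1-ε/2) = ((q:ℝ)^(1-ε/2) / (2^(n-2)*β)) / (2*(n:ℝ)) := by
          rw [hcstdef]; ring
      _ ≤ (D:ℝ)^(n-2) / (2*(n:ℝ)) := by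
          exact (div_le_div_iff_of_pos_right h2npos).mpr hchain
      _ ≤ (s q : ℝ) := by rw [div_le_iff₀ h2npos]; linarith [hR]
  -- conclude
  have hg : Tendsto (fun q:ℕ => cst * (q:ℝ)^(ε/2)) atTop atTop := by
    apply Tendsto.const_mul_atTop hcstpos
    exact (tendsto_rpow_atTop (by linarith : (0:ℝ) < ε/2)).comp tendsto_natCast_atTop_atTop
  apply Filter.tendsto_atTop_mono' _ _ hg
  filter_upwards [Filter.eventually_ge_atTop 1, hkey] with q hq1 hkq
  have hqpos : (0:ℝ) < (q:ℝ) := by exact_mod_cast hq1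
  have hpow : (q:ℝ)^((1:ℝ)-ε/2) / (q:ℝ)^((1:ℝ)-ε) = (q:ℝ)^(ε/2) := by
    rw [← Real.rpow_sub hqpos]
    ring_nf
  calc cst*(q:ℝ)^(ε/2) = cst * (q:ℝ)^((1:ℝ)-ε/2) / (q:ℝ)^((1:ℝ)-ε) := by
        rw [mul_div_assoc, hpow]
    _ ≤ (s q : ℝ) / (q:ℝ)^((1:ℝ)-ε) :=
        (div_le_div_iff_of_pos_right (Real.rpow_pos_of_pos hqpos _)).mpr hkq
end
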